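/- arXiv:1905.04123 — 8 statements merged into one kernel-verified Lean document; each statement's English description precedes it below -/
import Mathlib

section
/- For any integer N ≥ 1, the sum over k from 1 to N of 1/sin²(kπ/(N+1)) equals (N² + 2N)/3. -/
open Real Finset

lemma sum_cast_id' (n : ℕ) : ∑ j ∈ range n, (j:ℂ) = n*(n-1)/2 := by
  induction n with
  | zero => simp
  | succ m ih => rw [Finset.sum_range_succ, ih]; push_cast; ring

lemma sum_cast_sq' (n : ℕ) : ∑ j ∈ range n, (j:ℂ)^2 = n*(n-1)*(2*n-1)/6 := by
  induction n with
  | zero => simp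
  | succ m ih => rw [Finset.sum_range_succ, ih]; push_cast; ring

lemma sum_affine' (n : ℕ) (a b : ℂ) :
    ∑ j ∈ range n, (a * j + b * (j:ℂ)^2) = a*(n*(n-1)/2) + b*(n*(n-1)*(2*n-1)/6) := by
  rw [Finset.sum_add_distrib, ← Finset.mul_sum, ← Finset.mul_sum, sum_cast_id', sum_cast_sq']

lemma sum_j_zj {n : ℕ} {z : ℂ} (hz : z ^ n = 1) (hz1 : z ≠ 1) :
    (1 - z) * ∑ j ∈ range n, (j:ℂ) * z^j = -n := by
  have hgeom : ∑ j ∈ range n, z^j = 0 := by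
    rw [geom_sum_eq hz1, hz, sub_self, zero_div]
  have key : ∑ j ∈ range n, ((j:ℂ) * z^j - ((j:ℂ)+1) * z^(j+1)) = 0 - n * z^n := by
    have := Finset.sum_range_sub' (fun j => (j:ℂ) * z^j) n
    simpa using this
  have expand : (1 - z) * ∑ j ∈ range n, (j:ℂ) * z^j
      = (∑ j ∈ range n, ((j:ℂ) * z^j - ((j:ℂ)+1) * z^(j+1))) + z * ∑ j ∈ range n, z^j := by
    rw [Finset.mul_sum, Finset.mul_sum, ← Finset.sum_add_distrib]
    apply Finset.sum_congr rfl
    intro j _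
    ring
  rw [expand, key, hgeom, hz]
  ring

lemma inv_sin_sq_eq (N : ℕ) (n : ℕ) (hn : n = N + 1) (hn0 : (n:ℂ) ≠ 0)
    (w : ℂ) (hw : w = Complex.exp (2 * π * Complex.I / n))
    (hwn : w ^ n = 1) (hdvd : ∀ m : ℕ, w ^ m = 1 → n ∣ m)
    (k : ℕ) (hk : k ∈ Finset.Icc 1 N) :
    ((1 / (Real.sin (k * π / (N + 1)))^2 : ℝ) : ℂ)
      = -4 * w^k * (∑ j ∈ range n, (j:ℂ) * (w^k)^j)^2 / (n:ℂ)^2 := by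
  simp only [Finset.mem_Icc] at hk
  have hwne : w ≠ 0 := by rw [hw]; exact Complex.exp_ne_zero _
  set z : ℂ := w ^ k with hz
  have hz1 : z ≠ 1 := by
    intro h
    have := hdvd k h
    have := Nat.le_of_dvd (by omega) this
    omega
  have hzn : z ^ n = 1 := by rw [hz, pow_right_comm, hwn, one_pow]
  have hS := sum_j_zj hzn hz1
  have hzne0 : z ≠ 0 := pow_ne_zero _ hwne
  have h1z : (1 : ℂ) - z ≠ 0 := sub_ne_zero.mpr (Ne.symm hz1)
  set θ : ℝ := k * π / (N + 1) with hθ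
  have hzexp : z = Complex.exp (2 * θ * Complex.I) := by
    rw [hz, hw, ← Complex.exp_nat_mul]
    congr 1
    push_cast [hθ, hn]
    have : ((N:ℂ) + 1) ≠ 0 := by
      have : ((n:ℕ) : ℂ) ≠ 0 := hn0
      rw [hn] at this; push_cast at this; exact this
    field_simp
  set E : ℂ := Complex.exp ((θ:ℂ) * Complex.I) with hE
  set F : ℂ := Complex.exp (-(θ:ℂ) * Complex.I) with hF
  have hEne : E ≠ 0 := Complex.exp_ne_zero _
  have hE2 : E ^ 2 = z := by
    rw [sq, hE, hzexp, ← Complex.exp_add]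
    congr 1; ring
  have hEF : E * F = 1 := by
    rw [hE, hF, ← Complex.exp_add,
      show (θ:ℂ) * Complex.I + -(θ:ℂ) * Complex.I = 0 by ring, Complex.exp_zero]
  clear_value z θ E F
  have hsin : ((Real.sin θ : ℝ) : ℂ)^2 * (-4 * z) = (1 - z)^2 := by
    rw [Complex.ofReal_sin, Complex.sin, ← hF, ← hE, ← hE2]
    linear_combination ((F - E)^2 * (-(E^2))) * Complex.I_sq + (F*E + 1 - 2*E^2) * hEF
  have hsne : ((Real.sin θ : ℝ) : ℂ) ≠ 0 := by
    intro h
    rw [h] at hsin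
    exact pow_ne_zero 2 h1z (by linear_combination -hsin)
  have hcast : ((1 / (Real.sin θ)^2 : ℝ) : ℂ) = 1 / ((Real.sin θ : ℝ) : ℂ)^2 := by
    push_cast; ring
  rw [hcast, div_eq_div_iff (pow_ne_zero 2 hsne) (pow_ne_zero 2 hn0)]
  linear_combination (-(∑ j ∈ range n, (j:ℂ) * z^j)^2) * hsin
    + (-((1-z)*(∑ j ∈ range n, (j:ℂ) * z^j) - (n:ℂ))) * hS

lemma sum_pow_Icc (N : ℕ) (hN : 1 ≤ N) (n : ℕ) (hn : n = N + 1)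
    (w : ℂ) (hwn : w ^ n = 1) (hdvd : ∀ m : ℕ, w ^ m = 1 → n ∣ m)
    (m : ℕ) (hm1 : 1 ≤ m) (hm2 : m ≤ 2*n - 1) :
    ∑ k ∈ Finset.Icc 1 N, (w^m)^k = (if m = n then (n:ℂ) else 0) - 1 := by
  have herase : (Finset.range n).erase 0 = Finset.Icc 1 N := by
    ext x; simp [hn]; omega
  have h0 : ∑ k ∈ Finset.Icc 1 N, (w^m)^k = (∑ k ∈ Finset.range n, (w^m)^k) - 1 := by
    rw [← herase, eq_sub_iff_add_eq]
    have := Finset.sum_erase_add (Finset.range n) (fun k => (w^m)^k)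
      (Finset.mem_range.mpr (by omega : 0 < n))
    simpa using this
  rw [h0]
  congr 1
  by_cases hmn : m = n
  · subst hmn
    rw [hwn]
    simp [if_pos rfl]
  · rw [if_neg hmn]
    have hne1 : w ^ m ≠ 1 := by
      intro h
      have := hdvd m h
      obtain ⟨c, rfl⟩ := this
      rcases Nat.lt_or_ge c 2 with hc | hc
      · interval_cases c <;> omega
      · have : 2*n ≤ n*c := by nlinarith
        omega
    rw [geom_sum_eq hne1, ← pow_mul, mul_comm, pow_mul, hwn, one_pow, sub_self, zero_div]

theorem sum_inv_sin_sq (N : ℕ) (hN : 1 ≤ N) :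
    ∑ k ∈ Finset.Icc 1 N, 1 / (Real.sin (k * π / (N + 1)))^2
      = ((N : ℝ)^2 + 2 * N) / 3 := by
  set n : ℕ := N + 1 with hn
  have hn0 : (n:ℂ) ≠ 0 := Nat.cast_ne_zero.mpr (by omega)
  set w : ℂ := Complex.exp (2 * π * Complex.I / n) with hw
  have hwn : w ^ n = 1 := by
    rw [hw, ← Complex.exp_nat_mul,
      show (n:ℂ) * (2 * π * Complex.I / n) = 2 * π * Complex.I by field_simp]
    exact Complex.exp_two_pi_mul_I
  have hdvd : ∀ m : ℕ, w ^ m = 1 → n ∣ m := by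
    intro m hm
    rw [hw, ← Complex.exp_nat_mul, Complex.exp_eq_one_iff] at hm
    obtain ⟨t, ht⟩ := hm
    have hπ : (π:ℂ) ≠ 0 := by exact_mod_cast Real.pi_ne_zero
    have h2πI : (2 * (π:ℂ) * Complex.I) ≠ 0 := by
      simp [hπ, Complex.I_ne_zero]
    have hmn : (m:ℂ) = (t:ℂ) * n := by
      have : (m:ℂ) * (2 * π * Complex.I) = ((t:ℂ) * n) * (2 * π * Complex.I) := by
        field_simp at ht
        linear_combination (2 * (π:ℂ) * Complex.I) * ht
      exact mul_right_cancel₀ h2πI this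
    have : (m:ℤ) = t * n := by exact_mod_cast hmn
    have : (n:ℤ) ∣ (m:ℤ) := ⟨t, by rw [this]; ring⟩
    exact_mod_cast this
  -- pass to complex numbers
  have key : ((∑ k ∈ Finset.Icc 1 N, 1 / (Real.sin (k * π / (N + 1)))^2 : ℝ) : ℂ)
      = ((N:ℂ)^2 + 2 * N) / 3 := by
    rw [Complex.ofReal_sum]
    rw [Finset.sum_congr rfl (fun k hk => inv_sin_sq_eq N n hn hn0 w hw hwn hdvd k hk)]
    have hstep : ∀ k : ℕ, -4*w^k*(∑ j ∈ range n, (j:ℂ)*(w^k)^j)^2/(n:ℂ)^2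
        = ∑ j ∈ range n, ∑ l ∈ range n, (-4)/(n:ℂ)^2*((j:ℂ)*l)*(w^(j+l+1))^k := by
      intro k
      rw [sq, Finset.sum_mul_sum]
      rw [Finset.mul_sum, Finset.sum_div]
      refine Finset.sum_congr rfl fun j _ => ?_
      rw [Finset.mul_sum, Finset.sum_div]
      refine Finset.sum_congr rfl fun l _ => ?_
      have hpow : (w^(j+l+1))^k = w^k * (w^k)^j * (w^k)^l := by
        rw [pow_right_comm, pow_add, pow_add, pow_one]; ring
      rw [hpow]; ring
    rw [Finset.sum_congr rfl (fun k _ => hstep k)]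
    rw [Finset.sum_comm]
    rw [Finset.sum_congr rfl (fun j _ => Finset.sum_comm ..)]
    -- now ∑ j ∑ l ∑ k
    have hinner : ∀ j ∈ range n, ∀ l ∈ range n,
        ∑ k ∈ Finset.Icc 1 N, (-4)/(n:ℂ)^2*((j:ℂ)*l)*(w^(j+l+1))^k
        = (-4)/(n:ℂ)^2*((j:ℂ)*l)*((if j+l+1 = n then (n:ℂ) else 0) - 1) := by
      intro j hj l hl
      rw [← Finset.mul_sum,
        sum_pow_Icc N hN n hn w hwn hdvd (j+l+1) (by omega)
          (by simp only [Finset.mem_range] at hj hl; omega)]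
    rw [Finset.sum_congr rfl (fun j hj => Finset.sum_congr rfl (fun l hl => hinner j hj l hl))]
    -- evaluate the if-sum over l
    have hlsum : ∀ j ∈ range n,
        ∑ l ∈ range n, (-4)/(n:ℂ)^2*((j:ℂ)*l)*((if j+l+1 = n then (n:ℂ) else 0) - 1)
        = ((-4)/(n:ℂ)^2*((N:ℂ)*n - (n:ℂ)*(n-1)/2))*(j:ℂ) + ((-4)/(n:ℂ)^2*(-(n:ℂ)))*(j:ℂ)^2 := by
      intro j hj
      simp only [Finset.mem_range] at hj
      have hjN : j ≤ N := by omega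
      simp only [mul_sub, mul_one]
      rw [Finset.sum_sub_distrib]
      have hif : ∀ l ∈ range n, (-4)/(n:ℂ)^2*((j:ℂ)*l)*(if j+l+1 = n then (n:ℂ) else 0)
          = if l = N - j then (-4)/(n:ℂ)^2*((j:ℂ)*l)*n else 0 := by
        intro l hl
        by_cases h : j + l + 1 = n
        · rw [if_pos h, if_pos (by omega)]
        · rw [if_neg h, if_neg (by omega), mul_zero]
      rw [Finset.sum_congr rfl hif, Finset.sum_ite_eq' (range n) (N-j)]
      rw [if_pos (Finset.mem_range.mpr (by omega))]
      have hcast : ((N - j : ℕ) : ℂ) = (N:ℂ) - j := by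
        push_cast [hjN]; ring
      rw [hcast]
      have hsecond : ∑ l ∈ range n, (-4)/(n:ℂ)^2*((j:ℂ)*l)
          = (-4)/(n:ℂ)^2*(j:ℂ)*((n:ℂ)*(n-1)/2) := by
        simp only [← mul_assoc]
        rw [← Finset.mul_sum, sum_cast_id']
      rw [hsecond]
      ring
    rw [Finset.sum_congr rfl hlsum, sum_affine']
    have hnc : (n:ℂ) = (N:ℂ) + 1 := by rw [hn]; push_cast; ring
    rw [hnc]
    have hN1 : ((N:ℂ) + 1) ≠ 0 := by rw [← hnc]; exact hn0
    have h3 : (3:ℂ) ≠ 0 := by norm_num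
    field_simp [hN1, h3]
    ring
  have key2 : ((∑ k ∈ Finset.Icc 1 N, 1 / (Real.sin (k * π / (N + 1)))^2 : ℝ) : ℂ)
      = ((((N:ℝ)^2 + 2 * N) / 3 : ℝ) : ℂ) := by
    rw [key]; push_cast; ring
  exact_mod_cast key2
end

section
/- For any integer N ≥ 1 and any l ∈ {0,1,...,N}, letting β_j = 2πj/(N+1), one has N = 2·∑_{j=0, j≠l}^{N} e^{iβ_l}/(e^{iβ_l} - e^{iβ_j}). -/
open Real Complex Finset

noncomputable def ee (x : ℝ) : ℂ := Complex.exp (x * Complex.I)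

noncomputable def β (N j : ℕ) : ℝ := 2 * π * j / (N + 1)

theorem sum_roots_identity (N : ℕ) (hN : 1 ≤ N) (l : ℕ) (hl : l ≤ N) :
    (N : ℂ) = 2 * ∑ j ∈ (Finset.range (N + 1)).erase l,
      ee (β N l) / (ee (β N l) - ee (β N j)) := by
  set n := N + 1 with hn
  have hn0 : 0 < n := by omega
  set ζ : ℂ := Complex.exp (2 * π * Complex.I / n) with hζdef
  have hζ : IsPrimitiveRoot ζ n := Complex.isPrimitiveRoot_exp n (by omega)
  have horder : orderOf ζ = n := hζ.eq_orderOf.symm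
  have hee : ∀ j : ℕ, ee (β N j) = ζ ^ j := by
    intro j
    rw [ee, β, hζdef, ← Complex.exp_nat_mul]
    congr 1
    have hne : ((N : ℂ) + 1) ≠ 0 := Nat.cast_add_one_ne_zero N
    push_cast
    field_simp
    have hn' : (n : ℂ) = N + 1 := by rw [hn]; exact Nat.cast_succ N
    have hnn : (n : ℂ) * (n : ℂ)⁻¹ = 1 := mul_inv_cancel₀ (by rw [hn']; exact hne)
    linear_combination (-(j : ℂ)) * hnn + ((j : ℂ) * (n : ℂ)⁻¹) * hn'
  have hζ1 : ζ ^ n = 1 := hζ.pow_eq_one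
  have hmod : ∀ a : ℕ, ζ ^ a = ζ ^ (a % n) := by
    intro a
    conv_lhs => rw [← Nat.div_add_mod a n, pow_add, pow_mul, hζ1, one_pow, one_mul]
  have hpow : ∀ i j : ℕ, i ≡ j [MOD n] → ζ ^ i = ζ ^ j := by
    intro i j h
    rw [hmod i, hmod j, h]
  have hinj : ∀ i j : ℕ, i < n → j < n → ζ ^ i = ζ ^ j → i = j := by
    intro i j hi hj h
    exact hζ.pow_inj hi hj h
  set σ : ℕ → ℕ := fun j => (2 * l + n - j) % n with hσdef
  have hσlt : ∀ j, σ j < n := fun j => Nat.mod_lt _ hn0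
  have hkey : ∀ j, j < n → ζ ^ (σ j) * ζ ^ j = ζ ^ l * ζ ^ l := by
    intro j hj
    rw [← pow_add, ← pow_add]
    apply hpow
    calc σ j + j ≡ (2 * l + n - j) + j [MOD n] :=
          Nat.ModEq.add_right j (Nat.mod_modEq _ _)
      _ = 2 * l + n := by omega
      _ ≡ l + l [MOD n] := by
          have : 2 * l + n ≡ 2 * l + 0 [MOD n] :=
            Nat.ModEq.add_left _ (Nat.modEq_zero_iff_dvd.mpr dvd_rfl)
          simpa [two_mul] using this
  have hζj0 : ∀ j : ℕ, ζ ^ j ≠ 0 := fun j => pow_ne_zero _ (Complex.exp_ne_zero _)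
  have hσinv : ∀ j, j < n → σ (σ j) = j := by
    intro j hj
    have h1 := hkey j hj
    have h2 := hkey (σ j) (hσlt j)
    have : ζ ^ (σ (σ j)) = ζ ^ j := by
      have h3 := h2.trans h1.symm
      have h4 : ζ ^ σ (σ j) * ζ ^ σ j = ζ ^ j * ζ ^ σ j := by
        rw [h3]; ring
      exact mul_right_cancel₀ (hζj0 _) h4
    exact hinj _ _ (hσlt _) hj this
  -- main pairing computation
  have hmem : ∀ j ∈ (Finset.range n).erase l, ζ ^ l ≠ ζ ^ j := by
    intro j hj
    have hjl : j ≠ l := Finset.ne_of_mem_erase hj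
    have hjn : j < n := Finset.mem_range.mp (Finset.mem_of_mem_erase hj)
    intro h
    exact hjl (hinj _ _ hjn (by omega) h.symm)
  have hσmem : ∀ j ∈ (Finset.range n).erase l, σ j ∈ (Finset.range n).erase l := by
    intro j hj
    have hjn : j < n := Finset.mem_range.mp (Finset.mem_of_mem_erase hj)
    refine Finset.mem_erase.mpr ⟨?_, Finset.mem_range.mpr (hσlt j)⟩
    intro h
    have := hkey j hjn
    rw [h] at this
    exact hmem j hj (mul_left_cancel₀ (hζj0 l) this).symm
  set f : ℕ → ℂ := fun j => ζ ^ l / (ζ ^ l - ζ ^ j) - 1 / 2 with hfdef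
  have hpair : ∀ j ∈ (Finset.range n).erase l, f j + f (σ j) = 0 := by
    intro j hj
    have hjn : j < n := Finset.mem_range.mp (Finset.mem_of_mem_erase hj)
    have h1 : ζ ^ l - ζ ^ j ≠ 0 := sub_ne_zero.mpr (hmem j hj)
    have h2 : ζ ^ l - ζ ^ (σ j) ≠ 0 := sub_ne_zero.mpr (hmem _ (hσmem j hj))
    have hk := hkey j hjn
    simp only [hfdef]
    field_simp
    ring_nf
    linear_combination (-2 : ℂ) * hk
  have hsum0 : ∑ j ∈ (Finset.range n).erase l, f j = 0 := by
    refine Finset.sum_involution (fun j _ => σ j) hpair ?_ hσmem ?_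
    · intro j hj hfj
      intro h
      apply hfj
      have h' : σ j = j := h
      have := hpair j hj
      rw [h'] at this
      have h2 : (2 : ℂ) * f j = 0 := by linear_combination this
      simpa using (mul_eq_zero.mp h2).resolve_left (by norm_num)
    · intro j hj
      exact hσinv j (Finset.mem_range.mp (Finset.mem_of_mem_erase hj))
  have hcard : ((Finset.range n).erase l).card = N := by
    rw [Finset.card_erase_of_mem (Finset.mem_range.mpr (by omega)), Finset.card_range]
    omega
  have hsum : ∑ j ∈ (Finset.range n).erase l, ζ ^ l / (ζ ^ l - ζ ^ j) = (N : ℂ) / 2 := by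
    have := Finset.sum_sub_distrib (s := (Finset.range n).erase l)
      (f := fun j => ζ ^ l / (ζ ^ l - ζ ^ j)) (g := fun _ => (1 : ℂ) / 2)
    rw [hfdef] at hsum0
    rw [this] at hsum0
    rw [Finset.sum_const, hcard] at hsum0
    have := sub_eq_zero.mp hsum0
    rw [this]
    push_cast
    ring
  calc (N : ℂ) = 2 * ((N : ℂ) / 2) := by ring
    _ = 2 * ∑ j ∈ (Finset.range (N + 1)).erase l, ee (β N l) / (ee (β N l) - ee (β N j)) := by
        rw [← hsum]
        congr 1
        apply Finset.sum_congr rfl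
        intro j _
        rw [hee, hee]
end

section
/- For any integer N ≥ 1 and any l ∈ {0,...,N}, with d_j = 1/sin²(jπ/(N+1)) for j = 1,...,N, the quantity ∑_{j=0, j≠l}^{N} d_{|j-l|} is independent of l and equals (N² + 2N)/3. -/
open Real Finset

noncomputable def dd (N j : ℕ) : ℝ := 1 / (Real.sin (j * π / (N + 1)))^2

noncomputable def ww (n : ℕ) : ℂ := Complex.exp (2 * Real.pi * Complex.I / n)

lemma ww_pow_n (n : ℕ) (hn : 0 < n) : (ww n)^n = 1 := by
  rw [ww, ← Complex.exp_nat_mul]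
  have h : (n:ℂ) ≠ 0 := Nat.cast_ne_zero.mpr hn.ne'
  have : (n:ℂ) * (2 * (Real.pi:ℂ) * Complex.I / n) = 2 * Real.pi * Complex.I := by
    field_simp
  rw [this, Complex.exp_two_pi_mul_I]

lemma ww_pow_ne_one (n j : ℕ) (h1 : 1 ≤ j) (h2 : j < n) : (ww n)^j ≠ 1 := by
  rw [ww, ← Complex.exp_nat_mul]
  intro h
  rw [Complex.exp_eq_one_iff] at h
  obtain ⟨m, hm⟩ := h
  have hn : (n:ℂ) ≠ 0 := Nat.cast_ne_zero.mpr (by omega)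
  have hπ : (Real.pi:ℂ) ≠ 0 := by exact_mod_cast Real.pi_ne_zero
  have hI : Complex.I ≠ 0 := Complex.I_ne_zero
  have h2' : (2:ℂ) * Real.pi * Complex.I ≠ 0 := by
    simp [hπ, hI]
  have hc : (j:ℂ) = (m:ℂ) * n := by
    have hm' : (j:ℂ) * (2 * Real.pi * Complex.I) = ((m:ℂ) * n) * (2 * Real.pi * Complex.I) := by
      field_simp at hm
      linear_combination (2 * Real.pi * Complex.I) * hm
    exact mul_right_cancel₀ h2' hm'
  have hj : (j:ℤ) = m * n := by exact_mod_cast hc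
  have hn' : (0:ℤ) < n := by exact_mod_cast Nat.pos_of_ne_zero (by omega)
  rcases le_or_gt m 0 with h|h
  · have : m * (n:ℤ) ≤ 0 := mul_nonpos_iff.mpr (Or.inr ⟨h, hn'.le⟩)
    omega
  · have : (n:ℤ) ≤ m * n := le_mul_of_one_le_left hn'.le h
    have hjn : (j:ℤ) < n := by exact_mod_cast h2
    omega

lemma geom_zero (n j : ℕ) (h1 : 1 ≤ j) (h2 : j < n) :
    ∑ k ∈ Finset.range n, ((ww n)^j)^k = 0 := by
  rw [geom_sum_eq (ww_pow_ne_one n j h1 h2)]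
  rw [← pow_mul, mul_comm j n, pow_mul, ww_pow_n n (by omega), one_pow]
  simp

lemma sum_cast_range (m : ℕ) : ∑ j ∈ Finset.range m, (j:ℂ) = m * (m-1) / 2 := by
  induction m with
  | zero => simp
  | succ k ih => rw [Finset.sum_range_succ, ih]; push_cast; ring

lemma sum_sq_cast_range (m : ℕ) : ∑ j ∈ Finset.range m, (j:ℂ)^2 = m * (m-1) * (2*m-1) / 6 := by
  induction m with
  | zero => simp
  | succ k ih => rw [Finset.sum_range_succ, ih]; push_cast; ring

lemma key (n : ℕ) (hn : 2 ≤ n) (k : ℕ) (h1 : 1 ≤ k) (h2 : k < n) :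
    ((1 : ℂ) / ((Real.sin (k * Real.pi / n) : ℝ) : ℂ)^2)
      = (2/(n:ℂ)) * ∑ j ∈ Finset.range n, (j:ℂ)^2 * (ww n)^(j*k)
        - 2 * ∑ j ∈ Finset.range n, (j:ℂ) * (ww n)^(j*k) := by
  have hn0 : (n:ℂ) ≠ 0 := Nat.cast_ne_zero.mpr (by omega)
  set ζ : ℂ := (ww n)^k with hζ
  have hrw : ∀ j : ℕ, (ww n)^(j*k) = ζ^j := by
    intro j; rw [hζ, ← pow_mul, mul_comm]
  have hζn : ζ^n = 1 := by
    rw [hζ, ← pow_mul, mul_comm, pow_mul, ww_pow_n n (by omega), one_pow]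
  have hζ1 : ζ ≠ 1 := ww_pow_ne_one n k h1 h2
  have hζ0 : ζ ≠ 0 := by
    rw [hζ, ww]; exact pow_ne_zero _ (Complex.exp_ne_zero _)
  have hG : ∑ j ∈ Finset.range n, ζ^j = 0 := geom_zero n k h1 h2
  set S1 : ℂ := ∑ j ∈ Finset.range n, (j:ℂ) * ζ^j with hS1
  set S2 : ℂ := ∑ j ∈ Finset.range n, (j:ℂ)^2 * ζ^j with hS2
  -- telescoping identities
  have hT1 : (ζ - 1) * S1 = n := by
    have tele := Finset.sum_range_sub (fun j => ((j:ℂ)-1) * ζ^j) n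
    have tele2 : ∑ j ∈ Finset.range n, ((ζ - 1) * ((j:ℂ) * ζ^j) + ζ^j)
        = (((n:ℕ):ℂ)-1) * ζ^n - (((0:ℕ):ℂ)-1) * ζ^0 := by
      rw [← tele]
      apply Finset.sum_congr rfl
      intro j _
      push_cast
      rw [pow_succ]; ring
    rw [Finset.sum_add_distrib, ← Finset.mul_sum, hG, hζn, ← hS1] at tele2
    push_cast at tele2
    linear_combination tele2
  have hT2 : (ζ - 1) * S2 = (n:ℂ)^2 - 2*n - 2*S1 := by
    have tele := Finset.sum_range_sub (fun j => ((j:ℂ)-1)^2 * ζ^j) n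
    have tele2 : ∑ j ∈ Finset.range n, ((ζ - 1) * ((j:ℂ)^2 * ζ^j) + 2*((j:ℂ) * ζ^j) - ζ^j)
        = (((n:ℕ):ℂ)-1)^2 * ζ^n - (((0:ℕ):ℂ)-1)^2 * ζ^0 := by
      rw [← tele]
      apply Finset.sum_congr rfl
      intro j _
      push_cast
      rw [pow_succ]; ring
    rw [Finset.sum_sub_distrib, Finset.sum_add_distrib, ← Finset.mul_sum, ← Finset.mul_sum,
      hG, hζn, ← hS1, ← hS2] at tele2
    push_cast at tele2
    linear_combination tele2
  -- sin squared identity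
  have hs4 : 4 * (Complex.sin ((k:ℂ) * (Real.pi:ℂ) / n))^2 * ζ = -(ζ-1)^2 := by
    set e : ℂ := Complex.exp ((k:ℂ) * (Real.pi:ℂ) * Complex.I / n) with he
    have he0 : e ≠ 0 := Complex.exp_ne_zero _
    have hζe : ζ = e^2 := by
      rw [hζ, ww, ← Complex.exp_nat_mul, he, ← Complex.exp_nat_mul]
      congr 1
      push_cast
      ring
    have hsin : Complex.sin ((k:ℂ) * (Real.pi:ℂ) / n) = (e⁻¹ - e) * Complex.I / 2 := by
      rw [Complex.sin, he, ← Complex.exp_neg]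
      congr 3 <;> ring
    rw [hsin, hζe]
    have hI2 : (Complex.I)^2 = -1 := Complex.I_sq
    field_simp
    linear_combination (4*(1-e*e)^2) * hI2
  have hsr : Real.sin ((k:ℝ) * Real.pi / (n:ℝ)) ≠ 0 := by
    have h0 : (0:ℝ) < (k:ℝ) * Real.pi / n := by
      apply div_pos
      · exact mul_pos (by exact_mod_cast h1) Real.pi_pos
      · exact_mod_cast Nat.pos_of_ne_zero (by omega)
    have hlt : (k:ℝ) * Real.pi / n < Real.pi := by
      rw [div_lt_iff₀ (by exact_mod_cast Nat.pos_of_ne_zero (by omega) : (0:ℝ) < n)]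
      have : (k:ℝ) < n := by exact_mod_cast h2
      nlinarith [Real.pi_pos]
    exact ne_of_gt (Real.sin_pos_of_pos_of_lt_pi h0 hlt)
  have hcs : ((Real.sin ((k:ℝ) * Real.pi / (n:ℝ)) : ℝ) : ℂ) = Complex.sin ((k:ℂ) * (Real.pi:ℂ) / n) := by
    rw [Complex.ofReal_sin]
    push_cast
    ring_nf
  set sc : ℂ := Complex.sin ((k:ℂ) * (Real.pi:ℂ) / n) with hscdef
  have hsc0 : sc ≠ 0 := by
    rw [← hcs]
    exact_mod_cast hsr
  have hmain : -(ζ-1)^2 * (S2 - n*S1) = 2*n*ζ := by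
    linear_combination (-(ζ-1))*hT2 + ((n:ℂ)*(ζ-1)+2)*hT1
  have h6 : (4*sc^2*(S2 - (n:ℂ)*S1))*ζ = ((2:ℂ)*n)*ζ := by
    linear_combination (S2 - (n:ℂ)*S1)*hs4 + hmain
  have h7 : 4*sc^2*(S2 - (n:ℂ)*S1) = (2:ℂ)*n := mul_right_cancel₀ hζ0 h6
  simp only [hrw]
  rw [← hS1, ← hS2, hcs]
  rw [div_eq_iff (pow_ne_zero 2 hsc0)]
  field_simp
  linear_combination (-1/2 : ℂ) * h7

lemma innerSumW (N : ℕ) (j : ℕ) (hj1 : 1 ≤ j) (hj2 : j < N + 1) :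
    ∑ k ∈ Finset.Icc 1 N, (ww (N+1))^(j*k) = -1 := by
  have hg : ∑ k ∈ Finset.range (N+1), ((ww (N+1))^j)^k = 0 := geom_zero (N+1) j hj1 hj2
  have h0 : (0:ℕ) ∈ Finset.range (N+1) := by simp
  rw [← Finset.add_sum_erase _ _ h0] at hg
  have herase : (Finset.range (N+1)).erase 0 = Finset.Icc 1 N := by
    ext x; simp; omega
  rw [herase] at hg
  have : ∑ k ∈ Finset.Icc 1 N, ((ww (N+1))^j)^k = -1 := by
    simp only [pow_zero] at hg
    linear_combination hg
  rw [← this]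
  apply Finset.sum_congr rfl
  intro k _
  rw [← pow_mul]

lemma sumB (N : ℕ) (hN : 1 ≤ N) :
    ∑ k ∈ Finset.Icc 1 N, dd N k = ((N:ℝ)^2 + 2*N)/3 := by
  have hcast : ∀ k ∈ Finset.Icc 1 N, ((dd N k : ℝ) : ℂ)
      = (2/((N:ℂ)+1)) * ∑ j ∈ Finset.range (N+1), (j:ℂ)^2 * (ww (N+1))^(j*k)
        - 2 * ∑ j ∈ Finset.range (N+1), (j:ℂ) * (ww (N+1))^(j*k) := by
    intro k hk
    simp only [Finset.mem_Icc] at hk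
    have hkey := key (N+1) (by omega) k hk.1 (by omega)
    rw [dd]
    push_cast
    push_cast at hkey
    convert hkey using 3
  have main : ((∑ k ∈ Finset.Icc 1 N, dd N k : ℝ) : ℂ) = (((N:ℝ)^2 + 2*N)/3 : ℝ) := by
    push_cast
    rw [Finset.sum_congr rfl hcast, Finset.sum_sub_distrib, ← Finset.mul_sum, ← Finset.mul_sum]
    rw [Finset.sum_comm (s := Finset.Icc 1 N) (t := Finset.range (N+1))]
    rw [Finset.sum_comm (s := Finset.Icc 1 N) (t := Finset.range (N+1))]
    have hA : ∀ j ∈ Finset.range (N+1), ∑ k ∈ Finset.Icc 1 N, (j:ℂ)^2 * (ww (N+1))^(j*k)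
        = (j:ℂ)^2 * (-1) := by
      intro j hj
      rw [← Finset.mul_sum]
      rcases Nat.eq_zero_or_pos j with h | h
      · subst h; simp
      · rw [innerSumW N j h (Finset.mem_range.mp hj)]
    have hB : ∀ j ∈ Finset.range (N+1), ∑ k ∈ Finset.Icc 1 N, (j:ℂ) * (ww (N+1))^(j*k)
        = (j:ℂ) * (-1) := by
      intro j hj
      rw [← Finset.mul_sum]
      rcases Nat.eq_zero_or_pos j with h | h
      · subst h; simp
      · rw [innerSumW N j h (Finset.mem_range.mp hj)]
    rw [Finset.sum_congr rfl hA, Finset.sum_congr rfl hB]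
    have e1 : ∑ j ∈ Finset.range (N+1), (j:ℂ)^2 * (-1)
        = -(((N:ℂ)+1) * ((N:ℂ)+1-1) * (2*((N:ℂ)+1)-1) / 6) := by
      have := sum_sq_cast_range (N+1)
      push_cast at this
      calc ∑ j ∈ Finset.range (N+1), (j:ℂ)^2 * (-1)
          = -∑ j ∈ Finset.range (N+1), (j:ℂ)^2 := by
            rw [← Finset.sum_neg_distrib]; apply Finset.sum_congr rfl; intro j _; ring
        _ = _ := by rw [this]
    have e2 : ∑ j ∈ Finset.range (N+1), (j:ℂ) * (-1)
        = -(((N:ℂ)+1) * ((N:ℂ)+1-1) / 2) := by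
      have := sum_cast_range (N+1)
      push_cast at this
      calc ∑ j ∈ Finset.range (N+1), (j:ℂ) * (-1)
          = -∑ j ∈ Finset.range (N+1), (j:ℂ) := by
            rw [← Finset.sum_neg_distrib]; apply Finset.sum_congr rfl; intro j _; ring
        _ = _ := by rw [this]
    rw [e1, e2]
    have hn0 : (N:ℂ) + 1 ≠ 0 := by
      have h : ((N:ℂ)+1) = ((N+1 : ℕ) : ℂ) := by push_cast; ring
      rw [h]
      exact Nat.cast_ne_zero.mpr (Nat.succ_ne_zero N)
    field_simp
    ring
  exact_mod_cast main

lemma dd_symm (N k : ℕ) (h1 : 1 ≤ k) (h2 : k ≤ N) : dd N (N+1-k) = dd N k := by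
  rw [dd, dd]
  have hN1 : ((N:ℝ)+1) ≠ 0 := by positivity
  have hc : ((N+1-k : ℕ):ℝ) = (N:ℝ)+1-(k:ℝ) := by
    have : k ≤ N + 1 := by omega
    push_cast [Nat.cast_sub this]
    ring
  have harg : ((N+1-k : ℕ):ℝ) * π / ((N:ℝ)+1) = π - (k:ℝ) * π / ((N:ℝ)+1) := by
    rw [hc]; field_simp
  rw [harg, Real.sin_pi_sub]

theorem sum_d_absdiff (N : ℕ) (hN : 1 ≤ N) (l : ℕ) (hl : l ≤ N) :
    ∑ j ∈ (Finset.range (N + 1)).erase l, dd N ((j : ℤ) - (l : ℤ)).natAbs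
      = ((N : ℝ)^2 + 2 * N) / 3 := by
  rw [← sumB N hN]
  have hsplit : (Finset.range (N+1)).erase l = Finset.range l ∪ Finset.Ico (l+1) (N+1) := by
    ext x; simp; omega
  have hdisj : Disjoint (Finset.range l) (Finset.Ico (l+1) (N+1)) := by
    rw [Finset.disjoint_left]; intro x hx hx'; simp at hx hx'; omega
  rw [hsplit, Finset.sum_union hdisj]
  have h1 : ∑ j ∈ Finset.range l, dd N ((j : ℤ) - (l : ℤ)).natAbs
      = ∑ k ∈ Finset.Icc 1 l, dd N k := by
    apply Finset.sum_nbij' (i := fun j => l - j) (j := fun k => l - k)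
    · intro a ha; simp at ha ⊢; omega
    · intro a ha; simp at ha ⊢; omega
    · intro a ha; simp at ha ⊢; omega
    · intro a ha; simp at ha ⊢; omega
    · intro a ha; simp at ha
      congr 1
      omega
  have h2 : ∑ j ∈ Finset.Ico (l+1) (N+1), dd N ((j : ℤ) - (l : ℤ)).natAbs
      = ∑ k ∈ Finset.Icc (l+1) N, dd N k := by
    apply Finset.sum_nbij' (i := fun j => N + 1 + l - j) (j := fun k => N + 1 + l - k)
    · intro a ha; simp at ha ⊢; omega
    · intro a ha; simp at ha ⊢; omega
    · intro a ha; simp at ha ⊢; omega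
    · intro a ha; simp at ha ⊢; omega
    · intro a ha; simp at ha
      have hn : ((a : ℤ) - (l : ℤ)).natAbs = a - l := by omega
      rw [hn]
      have hsym := dd_symm N (a - l) (by omega) (by omega)
      have : N + 1 - (a - l) = N + 1 + l - a := by omega
      rw [this] at hsym
      rw [← hsym]
  rw [h1, h2]
  rw [← Finset.sum_union (by rw [Finset.disjoint_left]; intro x hx hx'; simp at hx hx'; omega)]
  congr 1
  ext x; simp; omega
end

section
/- For any integer N ≥ 1, with d_j = 1/sin²(jπ/(N+1)) and β_j = 2πj/(N+1), one has D - ∑_{j=1}^{N} d_j e^{iβ_j} = 2N, where D = ∑_{j=1}^{N} d_j. -/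
open Real Complex Finset

lemma key_alg (s c : ℝ) (hs : s ≠ 0) (h : s^2 + c^2 = 1) :
    ((1/s^2 : ℝ) : ℂ) - ((1/s^2 : ℝ) : ℂ) *
      (((c^2 - s^2 : ℝ) : ℂ) + ((2*s*c : ℝ) : ℂ) * Complex.I)
      = 2 - 2 * ((c/s : ℝ) : ℂ) * Complex.I := by
  have hs' : (s : ℂ) ≠ 0 := by exact_mod_cast hs
  have h' : (s : ℂ)^2 + (c : ℂ)^2 = 1 := by exact_mod_cast h
  push_cast
  field_simp
  linear_combination (-1:ℂ) * h'

lemma sin_pos_of_mem (N j : ℕ) (h1 : 1 ≤ j) (h2 : j ≤ N) :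
    0 < Real.sin (j * π / (N + 1)) := by
  apply Real.sin_pos_of_pos_of_lt_pi
  · have : (0:ℝ) < j := by exact_mod_cast h1
    positivity
  · rw [div_lt_iff₀ (by positivity)]
    have : (j:ℝ) < N + 1 := by exact_mod_cast Nat.lt_succ_of_le h2
    nlinarith [Real.pi_pos]

lemma term_eq (N j : ℕ) (h1 : 1 ≤ j) (h2 : j ≤ N) :
    ((dd N j : ℝ) : ℂ) - (dd N j : ℂ) * ee (β N j)
      = 2 - 2 * ((Real.cos (j * π / (N + 1)) / Real.sin (j * π / (N + 1)) : ℝ) : ℂ)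
          * Complex.I := by
  set θ : ℝ := j * π / (N + 1) with hθ
  have hs : Real.sin θ ≠ 0 := (sin_pos_of_mem N j h1 h2).ne'
  have hβ : β N j = 2 * θ := by rw [β, hθ]; ring
  have hee : ee (β N j) = ((Real.cos θ ^ 2 - Real.sin θ ^ 2 : ℝ) : ℂ)
      + ((2 * Real.sin θ * Real.cos θ : ℝ) : ℂ) * Complex.I := by
    rw [ee, hβ, Complex.exp_mul_I, ← Complex.ofReal_cos, ← Complex.ofReal_sin,
      Real.cos_two_mul, Real.sin_two_mul]
    have hc : Real.cos θ ^ 2 - Real.sin θ ^ 2 = 2 * Real.cos θ ^ 2 - 1 := by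
      have := Real.sin_sq_add_cos_sq θ; linarith
    rw [hc]
  rw [hee, dd, ← hθ]
  exact key_alg _ _ hs (Real.sin_sq_add_cos_sq θ)

lemma cot_sum_zero (N : ℕ) :
    ∑ j ∈ Finset.Icc 1 N, Real.cos (j * π / (N + 1)) / Real.sin (j * π / (N + 1)) = 0 := by
  set f : ℕ → ℝ := fun j => Real.cos (j * π / (N + 1)) / Real.sin (j * π / (N + 1)) with hf
  have harg : ∀ j ∈ Finset.Icc 1 N, ((N + 1 - j : ℕ) : ℝ) * π / (N + 1)
      = π - j * π / (N + 1) := by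
    intro j hj
    simp only [Finset.mem_Icc] at hj
    have hle : j ≤ N + 1 := Nat.le_succ_of_le hj.2
    rw [Nat.cast_sub hle]
    push_cast
    field_simp
  have hneg : ∀ j ∈ Finset.Icc 1 N, f (N + 1 - j) = - f j := by
    intro j hj
    simp only [hf, harg j hj, Real.cos_pi_sub, Real.sin_pi_sub, neg_div]
  refine Finset.sum_involution (fun j _ => N + 1 - j) ?_ ?_ ?_ ?_
  · intro j hj; beta_reduce; rw [show Real.cos (↑j * π / (↑N + 1)) / Real.sin (↑j * π / (↑N + 1)) = f j from rfl, show Real.cos (↑(N + 1 - j) * π / (↑N + 1)) / Real.sin (↑(N + 1 - j) * π / (↑N + 1)) = f (N + 1 - j) from rfl, hneg j hj]; ring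
  · intro j hj hfj heq
    apply hfj
    simp only [Finset.mem_Icc] at hj
    have heq' : N + 1 - j = j := heq
    have h2j : 2 * j = N + 1 := by omega
    have : (j : ℝ) * π / (N + 1) = π / 2 := by
      have : ((N : ℝ) + 1) = 2 * j := by exact_mod_cast h2j.symm
      rw [this]
      have hjpos : (0:ℝ) < j := by exact_mod_cast hj.1
      field_simp
    simp [hf, this]
  · intro j hj
    simp only [Finset.mem_Icc] at hj ⊢
    beta_reduce
    omega
  · intro j hj
    simp only [Finset.mem_Icc] at hj
    show N + 1 - (N + 1 - j) = j
    omega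

theorem D_minus_sum_d_exp (N : ℕ) (hN : 1 ≤ N) :
    ((∑ j ∈ Finset.Icc 1 N, dd N j : ℝ) : ℂ)
      - ∑ j ∈ Finset.Icc 1 N, (dd N j : ℂ) * ee (β N j) = 2 * N := by
  rw [Complex.ofReal_sum, ← Finset.sum_sub_distrib]
  rw [Finset.sum_congr rfl (fun j hj => by
    simp only [Finset.mem_Icc] at hj
    exact term_eq N j hj.1 hj.2)]
  rw [Finset.sum_sub_distrib, Finset.sum_const, Nat.card_Icc]
  have : ∑ j ∈ Finset.Icc 1 N, 2 * ((Real.cos (j * π / (N + 1)) /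
      Real.sin (j * π / (N + 1)) : ℝ) : ℂ) * Complex.I
      = 2 * ((∑ j ∈ Finset.Icc 1 N, Real.cos (j * π / (N + 1)) /
          Real.sin (j * π / (N + 1)) : ℝ) : ℂ) * Complex.I := by
    rw [Complex.ofReal_sum, Finset.mul_sum, Finset.sum_mul]
  rw [this, cot_sum_zero]
  simp
  ring
end

section
/- With A and (a^{ij}) = A^{-1} as above and β_j = 2πj/(N+1), for every s ∈ {1,...,N}: ∑_{j=1}^{N} a^{sj} e^{iβ_j} = (e^{iβ_s} - 1)/(2N), and ∑_{j=1}^{N} a^{sj} e^{-iβ_j} = (e^{-iβ_s} - 1)/(2N). -/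
/-!
Extend `A` to the circulant matrix `C` on `ZMod (N+1)` with first column `c 0 = D`,
`c m = -d_m`. Every character `χ` is an eigenvector of `C`, with eigenvalue `∑ v, c v * χ (-v)`.
Writing `ψ` for the standard character, `d_m = -4 ψ m / (ψ m - 1)²`, so for `χ = 1` and `χ = ψ`
the eigenvalue reduces to the sums of `1 / (ψ v - 1)` and `1 / (ψ v - 1)²` over `v ≠ 0`.
Expanding these as polynomials in `x = ψ v` (for `x ^ (N+1) = 1`, `x ≠ 1`, one has
`(N+1) / (x - 1) = ∑ i x^i`, and similarly for the square) and using orthogonality of characters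
gives the eigenvalues `0` and `2N`. Hence `C (ψ - 1) = 2N ψ`; as `ψ - 1` vanishes at `0`,
restricting to the indices `1, …, N` gives `A w = (e^{iβ_j})_j` with `w_j = (e^{iβ_j} - 1)/(2N)`.
The row sums of `A` are `d_{s+1} > 0`, so `A` is strictly diagonally dominant, hence invertible.
The second identity is the complex conjugate of the first.
-/

open Real Complex Finset Matrix

noncomputable def matA (N : ℕ) : Matrix (Fin N) (Fin N) ℝ :=
  fun i j => if i = j then ((N : ℝ)^2 + 2 * N) / 3
             else - dd N (((i : ℕ) : ℤ) - ((j : ℕ) : ℤ)).natAbs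

open ZMod

theorem sum_range_natCast_mul_two {R : Type*} [CommRing R] (m : ℕ) :
    (∑ i ∈ range m, (i : R)) * 2 = m * (m - 1) := by
  induction m with
  | zero => simp
  | succ m ih => rw [sum_range_succ, add_mul, ih]; push_cast; ring

theorem sum_range_natCast_sq_mul_six {R : Type*} [CommRing R] (m : ℕ) :
    (∑ i ∈ range m, (i : R) ^ 2) * 6 = m * (m - 1) * (2 * m - 1) := by
  induction m with
  | zero => simp
  | succ m ih => rw [sum_range_succ, add_mul, ih]; push_cast; ring

theorem sum_range_mul_pow_mul_sub_one {R : Type*} [CommRing R] (x : R) (n : ℕ) :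
    (∑ i ∈ range n, (i : R) * x ^ i) * (x - 1) = (n - 1) * x ^ n + 1 - ∑ i ∈ range n, x ^ i := by
  induction n with
  | zero => simp
  | succ n ih =>
    rw [sum_range_succ, sum_range_succ (fun i => x ^ i), add_mul, ih]
    push_cast
    ring

theorem sum_range_sq_mul_pow_mul_sub_one {R : Type*} [CommRing R] (x : R) (n : ℕ) :
    (∑ i ∈ range n, (i : R) ^ 2 * x ^ i) * (x - 1) =
      (n - 1) ^ 2 * x ^ n - 1 + ∑ i ∈ range n, x ^ i - 2 * ∑ i ∈ range n, (i : R) * x ^ i := by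
  induction n with
  | zero => simp
  | succ n ih =>
    rw [sum_range_succ, sum_range_succ (fun i => x ^ i), sum_range_succ (fun i => (i : R) * x ^ i),
      add_mul, ih]
    push_cast
    ring

section RootOfUnity

variable {K : Type*} [Field K] {x : K} {n : ℕ}

theorem geom_sum_eq_zero_of_pow_eq_one (hx : x ^ n = 1) (hx1 : x ≠ 1) :
    ∑ i ∈ range n, x ^ i = 0 := by
  rw [geom_sum_eq hx1, hx, sub_self, zero_div]

theorem inv_sub_one_eq_sum_range [CharZero K] (hn : n ≠ 0) (hx : x ^ n = 1) (hx1 : x ≠ 1) :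
    (x - 1)⁻¹ = ∑ i ∈ range n, (i / n : K) * x ^ i := by
  have key := sum_range_mul_pow_mul_sub_one x n
  rw [hx, geom_sum_eq_zero_of_pow_eq_one hx hx1] at key
  have hx1' : x - 1 ≠ 0 := sub_ne_zero.2 hx1
  simp_rw [div_mul_eq_mul_div, ← sum_div]
  field_simp
  linear_combination -key

theorem inv_sub_one_sq_eq_sum_range [CharZero K] (hn : n ≠ 0) (hx : x ^ n = 1) (hx1 : x ≠ 1) :
    ((x - 1) ^ 2)⁻¹ = ∑ i ∈ range n, (i * (n - 2 - i) / (2 * n) : K) * x ^ i := by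
  have hx1' : x - 1 ≠ 0 := sub_ne_zero.2 hx1
  have h1 := sum_range_mul_pow_mul_sub_one x n
  have h2 := sum_range_sq_mul_pow_mul_sub_one x n
  rw [hx, geom_sum_eq_zero_of_pow_eq_one hx hx1] at h1 h2
  have hsplit : ∑ i ∈ range n, (i * (n - 2 - i) / (2 * n) : K) * x ^ i =
      ((n - 2) * ∑ i ∈ range n, (i : K) * x ^ i - ∑ i ∈ range n, (i : K) ^ 2 * x ^ i) /
        (2 * n) := by
    rw [mul_sum, ← sum_sub_distrib, sum_div]
    exact sum_congr rfl fun i _ => by ring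
  rw [hsplit]
  field_simp
  linear_combination (x - 1) * h2 + (2 * x + n - n * x - 4) * h1

end RootOfUnity

/-- `1 / sin θ ^ 2` as a function of `exp (2 θ i)`; its junk value `0` at `1` matches
`1 / sin 0 ^ 2 = 0`. -/
noncomputable def invSinSqOfExp (w : ℂ) : ℂ := -4 * w / (w - 1) ^ 2

theorem ofReal_one_div_sin_sq (θ : ℝ) :
    ((1 / Real.sin θ ^ 2 : ℝ) : ℂ) = invSinSqOfExp (exp (2 * θ * I)) := by
  have hsq : exp (2 * θ * I) = exp (θ * I) ^ 2 := by rw [← Complex.exp_nat_mul]; push_cast; ring_nf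
  rw [invSinSqOfExp, hsq, ofReal_div, ofReal_one, ofReal_pow, ofReal_sin, Complex.sin, neg_mul,
    Complex.exp_neg]
  have hu := exp_ne_zero (θ * I)
  generalize exp (θ * I) = u at hu ⊢
  field_simp
  ring_nf
  rw [I_sq]
  ring

theorem invSinSqOfExp_inv (w : ℂ) : invSinSqOfExp w⁻¹ = invSinSqOfExp w := by
  rcases eq_or_ne w 0 with rfl | hw
  · simp
  rw [invSinSqOfExp, invSinSqOfExp, show w⁻¹ - 1 = -(w - 1) / w by field_simp; ring]
  field_simp

theorem invSinSqOfExp_eq_add (w : ℂ) :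
    invSinSqOfExp w = -4 * (((w - 1) ^ 2)⁻¹ + (w - 1)⁻¹) := by
  rcases eq_or_ne w 1 with rfl | hw
  · simp [invSinSqOfExp]
  have hw1 : w - 1 ≠ 0 := sub_ne_zero.2 hw
  rw [invSinSqOfExp]
  field_simp
  ring

theorem invSinSqOfExp_mul_inv {w : ℂ} (hw : w ≠ 0) :
    invSinSqOfExp w * w⁻¹ = -4 * ((w - 1) ^ 2)⁻¹ := by
  rw [invSinSqOfExp]
  field_simp

theorem Matrix.circulant_mulVec_addChar {G R : Type*} [AddCommGroup G] [Fintype G] [CommRing R]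
    (c : G → R) (ψ : AddChar G R) : circulant c *ᵥ ψ = (∑ v, c v * ψ (-v)) • ⇑ψ := by
  ext a
  rw [mulVec, dotProduct, Pi.smul_apply, smul_eq_mul, sum_mul,
    ← (Equiv.subLeft a).sum_comp]
  refine sum_congr rfl fun v _ => ?_
  rw [circulant_apply, Equiv.subLeft_apply, sub_sub_cancel, sub_eq_add_neg, AddChar.map_add_eq_mul]
  ring

theorem Matrix.mulVec_map_inv_eq {m R S : Type*} [Fintype m] [DecidableEq m] [CommRing R]
    [CommRing S] (f : R →+* S) {A : Matrix m m R} (hA : IsUnit A.det) {v b : m → S}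
    (h : A.map f *ᵥ v = b) : A⁻¹.map f *ᵥ b = v := by
  rw [← h, mulVec_mulVec, ← Matrix.map_mul, nonsing_inv_mul A hA,
    Matrix.map_one f f.map_zero f.map_one, one_mulVec]

section StdAddChar

variable {n : ℕ} [NeZero n]

theorem stdAddChar_pow_eq_one (v : ZMod n) : stdAddChar v ^ n = 1 := by
  rw [← AddChar.map_nsmul_eq_pow, nsmul_eq_mul, natCast_self, zero_mul, AddChar.map_zero_eq_one]

theorem stdAddChar_ne_zero (v : ZMod n) : stdAddChar v ≠ 0 :=
  Circle.coe_ne_zero _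

theorem stdAddChar_eq_one_iff {v : ZMod n} : stdAddChar v = 1 ↔ v = 0 := by
  rw [← (stdAddChar (N := n)).map_zero_eq_one, injective_stdAddChar.eq_iff]

theorem stdAddChar_natCast (m : ℕ) :
    stdAddChar (m : ZMod n) = exp (2 * π * I * m / n) := by
  simpa using stdAddChar_coe (N := n) m

theorem sum_stdAddChar_pow_mul_eq_zero (c : ℕ → ℂ) (hc : c 0 = 0) :
    ∑ v : ZMod n, ∑ i ∈ range n, c i * stdAddChar v ^ i = 0 := by
  rw [sum_comm]
  refine sum_eq_zero fun i hi => ?_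
  have horth : ∑ v : ZMod n, stdAddChar v ^ i = if (i : ZMod n) = 0 then (n : ℂ) else 0 := by
    simp_rw [← AddChar.map_nsmul_eq_pow, nsmul_eq_mul, mul_comm (i : ZMod n)]
    rw [AddChar.sum_mulShift _ (isPrimitive_stdAddChar n), ZMod.card, Nat.cast_ite, Nat.cast_zero]
  rw [← mul_sum, horth]
  split_ifs with h
  · rw [natCast_eq_zero_iff] at h
    rw [Nat.eq_zero_of_dvd_of_lt h (mem_range.1 hi), hc, zero_mul]
  · rw [mul_zero]

theorem sum_stdAddChar_eq_neg_sum (c : ℕ → ℂ) (hc : c 0 = 0) {F : ℂ → ℂ} (hF1 : F 1 = 0)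
    (hF : ∀ x : ℂ, x ^ n = 1 → x ≠ 1 → F x = ∑ i ∈ range n, c i * x ^ i) :
    ∑ v : ZMod n, F (stdAddChar v) = -∑ i ∈ range n, c i := by
  have hF' : ∀ v : ZMod n, F (stdAddChar v) =
      ∑ i ∈ range n, c i * stdAddChar v ^ i - if v = 0 then ∑ i ∈ range n, c i else 0 := by
    intro v
    split_ifs with hv
    · simp only [hv, AddChar.map_zero_eq_one, hF1, one_pow, mul_one, sub_self]
    · rw [sub_zero, hF _ (stdAddChar_pow_eq_one v) (stdAddChar_eq_one_iff.not.2 hv)]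
  simp_rw [hF', sum_sub_distrib, sum_stdAddChar_pow_mul_eq_zero c hc, sum_ite_eq', mem_univ,
    if_true, zero_sub]

theorem sum_inv_stdAddChar_sub_one :
    ∑ v : ZMod n, (stdAddChar v - 1)⁻¹ = -((n : ℂ) - 1) / 2 := by
  rw [sum_stdAddChar_eq_neg_sum (fun i => (i / n : ℂ)) (by simp) (by simp)
    fun x hx hx1 => inv_sub_one_eq_sum_range (NeZero.ne n) hx hx1, ← sum_div]
  have hn : (n : ℂ) ≠ 0 := Nat.cast_ne_zero.2 (NeZero.ne n)
  have h1 := sum_range_natCast_mul_two (R := ℂ) n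
  field_simp
  linear_combination -h1

theorem sum_inv_stdAddChar_sub_one_sq :
    ∑ v : ZMod n, ((stdAddChar v - 1) ^ 2)⁻¹ = -((n : ℂ) - 1) * (n - 5) / 12 := by
  rw [sum_stdAddChar_eq_neg_sum (fun i => (i * (n - 2 - i) / (2 * n) : ℂ)) (by simp) (by simp)
    fun x hx hx1 => inv_sub_one_sq_eq_sum_range (NeZero.ne n) hx hx1, ← sum_div]
  have hn : (n : ℂ) ≠ 0 := Nat.cast_ne_zero.2 (NeZero.ne n)
  have h1 := sum_range_natCast_mul_two (R := ℂ) n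
  have h2 := sum_range_natCast_sq_mul_six (R := ℂ) n
  have hsplit : ∑ i ∈ range n, (i * (n - 2 - i) : ℂ) =
      (n - 2) * ∑ i ∈ range n, (i : ℂ) - ∑ i ∈ range n, (i : ℂ) ^ 2 := by
    rw [mul_sum, ← sum_sub_distrib]
    exact sum_congr rfl fun i _ => by ring
  rw [hsplit]
  field_simp
  linear_combination (12 - 6 * n) * h1 + 2 * h2

theorem sum_invSinSqOfExp_stdAddChar :
    ∑ v : ZMod n, invSinSqOfExp (stdAddChar v) = ((n : ℂ) ^ 2 - 1) / 3 := by
  simp_rw [invSinSqOfExp_eq_add, ← mul_sum, sum_add_distrib, sum_inv_stdAddChar_sub_one_sq,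
    sum_inv_stdAddChar_sub_one]
  ring

theorem sum_invSinSqOfExp_stdAddChar_mul_neg :
    ∑ v : ZMod n, invSinSqOfExp (stdAddChar v) * stdAddChar (-v) = ((n : ℂ) - 1) * (n - 5) / 3 := by
  simp only [AddChar.map_neg_eq_inv, ne_eq, stdAddChar_ne_zero, not_false_eq_true,
    invSinSqOfExp_mul_inv]
  rw [← mul_sum, sum_inv_stdAddChar_sub_one_sq]
  ring

variable (n) in
/-- First column of the circulant matrix on `ZMod n` that restricts to `matA (n - 1)`. -/
noncomputable def circVec (v : ZMod n) : ℂ :=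
  (if v = 0 then ((n : ℂ) ^ 2 - 1) / 3 else 0) - invSinSqOfExp (stdAddChar v)

theorem sum_circVec : ∑ v, circVec n v = 0 := by
  simp only [circVec, sum_sub_distrib, sum_ite_eq', mem_univ, if_true, sum_invSinSqOfExp_stdAddChar,
    sub_self]

theorem sum_circVec_mul_stdAddChar_neg :
    ∑ v, circVec n v * stdAddChar (-v) = 2 * ((n : ℂ) - 1) := by
  simp only [circVec, sub_mul, sum_sub_distrib, ite_mul, zero_mul, sum_ite_eq', mem_univ, if_true,
    neg_zero, AddChar.map_zero_eq_one, mul_one, sum_invSinSqOfExp_stdAddChar_mul_neg]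
  ring

theorem circulant_circVec_mulVec :
    circulant (circVec n) *ᵥ (fun u => stdAddChar u - 1) = (2 * ((n : ℂ) - 1)) • ⇑stdAddChar := by
  have hψ := circulant_mulVec_addChar (circVec n) stdAddChar
  have h1 := circulant_mulVec_addChar (circVec n) 1
  rw [sum_circVec_mul_stdAddChar_neg] at hψ
  simp only [AddChar.one_apply, mul_one, sum_circVec, zero_smul] at h1
  have hsub : (fun u => stdAddChar u - 1) =
      ⇑(stdAddChar : AddChar (ZMod n) ℂ) - ⇑(1 : AddChar (ZMod n) ℂ) := by
    ext u
    rw [Pi.sub_apply, AddChar.one_apply]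
  rw [hsub, mulVec_sub, hψ, h1, sub_zero]

end StdAddChar

theorem ofReal_dd_natAbs (N : ℕ) (z : ℤ) :
    (dd N z.natAbs : ℂ) = invSinSqOfExp (stdAddChar (z : ZMod (N + 1))) := by
  have hnat : ∀ m : ℕ, (dd N m : ℂ) = invSinSqOfExp (stdAddChar (m : ZMod (N + 1))) := by
    intro m
    rw [dd, ofReal_one_div_sin_sq, stdAddChar_natCast]
    congr 2
    push_cast
    ring
  obtain ⟨m, rfl | rfl⟩ := Int.eq_nat_or_neg z
  · rw [Int.natAbs_natCast, Int.cast_natCast, hnat]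
  · rw [Int.natAbs_neg, Int.natAbs_natCast, Int.cast_neg, Int.cast_natCast,
      AddChar.map_neg_eq_inv, invSinSqOfExp_inv, hnat]

def toZModSucc (N : ℕ) (j : Fin N) : ZMod (N + 1) := (j + 1 : ℕ)

theorem sum_eq_add_sum_toZModSucc {M : Type*} [AddCommMonoid M] (N : ℕ) (h : ZMod (N + 1) → M) :
    ∑ u, h u = h 0 + ∑ j, h (toZModSucc N j) := by
  refine (Fin.sum_univ_succ h).trans ?_
  congr 2 with j
  congr 1
  apply Fin.ext
  -- `ZMod (N + 1)` is `Fin (N + 1)` by definition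
  show _ = ((j + 1 : ℕ) : ZMod (N + 1)).val
  rw [ZMod.val_natCast, Nat.mod_eq_of_lt (by omega), Fin.val_succ]

theorem toZModSucc_sub (N : ℕ) (s j : Fin N) :
    toZModSucc N s - toZModSucc N j = (((s : ℕ) : ℤ) - (j : ℕ) : ℤ) := by
  simp only [toZModSucc]
  push_cast
  ring

theorem toZModSucc_injective (N : ℕ) : Function.Injective (toZModSucc N) := by
  intro s j h
  rw [toZModSucc, toZModSucc, ZMod.natCast_eq_natCast_iff', Nat.mod_eq_of_lt (by omega),
    Nat.mod_eq_of_lt (by omega)] at h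
  exact Fin.ext (by omega)

theorem toZModSucc_ne_zero (N : ℕ) (s : Fin N) : toZModSucc N s ≠ 0 := by
  rw [toZModSucc, Ne, natCast_eq_zero_iff]
  exact Nat.not_dvd_of_pos_of_lt (by omega) (by omega)

theorem matA_map_ofReal (N : ℕ) :
    (matA N).map ofReal =
      (circulant (circVec (N + 1))).submatrix (toZModSucc N) (toZModSucc N) := by
  ext s j
  rw [map_apply, submatrix_apply, circulant_apply, circVec, toZModSucc_sub, ← ofReal_dd_natAbs,
    ← toZModSucc_sub, matA]
  simp only [sub_eq_zero, (toZModSucc_injective N).eq_iff]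
  split_ifs with h
  · subst h
    rw [sub_self, Int.natAbs_zero, dd, Nat.cast_zero, zero_mul, zero_div, Real.sin_zero]
    push_cast
    ring
  · rw [ofReal_neg, zero_sub]

theorem matA_map_mulVec (N : ℕ) :
    (matA N).map ofReal *ᵥ (fun j => stdAddChar (toZModSucc N j) - 1) =
      (2 * N : ℂ) • fun j => stdAddChar (toZModSucc N j) := by
  ext s
  have h := congrFun (circulant_circVec_mulVec (n := N + 1)) (toZModSucc N s)
  rw [mulVec, dotProduct, sum_eq_add_sum_toZModSucc, AddChar.map_zero_eq_one, sub_self, mul_zero,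
    zero_add] at h
  rw [matA_map_ofReal, Pi.smul_apply, smul_eq_mul]
  refine h.trans ?_
  rw [Pi.smul_apply, smul_eq_mul]
  push_cast
  ring

theorem sum_matA_apply (N : ℕ) (s : Fin N) : ∑ j, matA N s j = dd N (s + 1) := by
  have hA : ∀ j, (matA N s j : ℂ) = circVec (N + 1) (toZModSucc N s - toZModSucc N j) :=
    fun j => congrFun (congrFun (matA_map_ofReal N) s) j
  have hrow : ∑ u, circVec (N + 1) (toZModSucc N s - u) = 0 :=
    ((Equiv.subLeft _).sum_comp _).trans sum_circVec
  have hs : circVec (N + 1) (toZModSucc N s) = -dd N (s + 1) := by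
    rw [circVec, if_neg (toZModSucc_ne_zero N s), zero_sub, toZModSucc, ← Int.cast_natCast,
      ← ofReal_dd_natAbs, Int.natAbs_natCast]
  rw [sum_eq_add_sum_toZModSucc, sub_zero, hs] at hrow
  apply ofReal_injective
  rw [ofReal_sum]
  simp_rw [hA]
  linear_combination hrow

theorem dd_pos {N m : ℕ} (h0 : 0 < m) (hm : m ≤ N) : 0 < dd N m := by
  have hsin : 0 < Real.sin (m * π / (N + 1)) := by
    apply Real.sin_pos_of_pos_of_lt_pi (by positivity)
    rw [div_lt_iff₀ (by positivity)]
    have : (m : ℝ) < N + 1 := by exact_mod_cast Nat.lt_succ_of_le hm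
    nlinarith [pi_pos]
  rw [dd]
  positivity

theorem det_matA_ne_zero (N : ℕ) : (matA N).det ≠ 0 := by
  refine det_ne_zero_of_sum_row_lt_diag fun s => ?_
  have hoff : ∀ j ∈ univ.erase s, ‖matA N s j‖ = -matA N s j := fun j hj => by
    rw [matA, if_neg (ne_of_mem_erase hj).symm, norm_neg, neg_neg,
      Real.norm_of_nonneg (by rw [dd]; positivity)]
  have hdiag : ‖matA N s s‖ = matA N s s :=
    Real.norm_of_nonneg (by rw [matA, if_pos rfl]; positivity)
  rw [sum_congr rfl hoff, sum_neg_distrib, sum_erase_eq_sub (mem_univ s), sum_matA_apply, hdiag]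
  linarith [dd_pos (N := N) (m := s + 1) (by omega) s.isLt]

theorem ee_β_eq_stdAddChar (N k : ℕ) : ee (β N k) = stdAddChar (k : ZMod (N + 1)) := by
  rw [ee, β, stdAddChar_natCast]
  congr 1
  push_cast
  ring

theorem conj_ee (x : ℝ) : (starRingEnd ℂ) (ee x) = ee (-x) := by
  rw [ee, ee, ← exp_conj, map_mul, conj_ofReal, conj_I]
  push_cast
  ring_nf

theorem invA_exp_sum_general (N : ℕ) (s : Fin N) :
    (∑ j : Fin N, ((matA N)⁻¹ s j : ℂ) * ee (β N ((j : ℕ) + 1))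
        = (ee (β N ((s : ℕ) + 1)) - 1) / (2 * N)) ∧
    (∑ j : Fin N, ((matA N)⁻¹ s j : ℂ) * ee (-(β N ((j : ℕ) + 1)))
        = (ee (-(β N ((s : ℕ) + 1))) - 1) / (2 * N)) := by
  set x : Fin N → ℂ := fun j => stdAddChar (toZModSucc N j)
  have hN : (2 * N : ℂ) ≠ 0 := mul_ne_zero two_ne_zero (Nat.cast_ne_zero.2 s.pos.ne')
  have hsol : (matA N)⁻¹.map ofRealHom *ᵥ x = (2 * N : ℂ)⁻¹ • (x - 1) := by
    refine mulVec_map_inv_eq ofRealHom (isUnit_iff_ne_zero.2 (det_matA_ne_zero N)) ?_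
    have h : (matA N).map ofRealHom *ᵥ (x - 1) = (2 * N : ℂ) • x := matA_map_mulVec N
    rw [mulVec_smul, h, smul_smul, inv_mul_cancel₀ hN, one_smul]
  have h1 : ∑ j : Fin N, ((matA N)⁻¹ s j : ℂ) * ee (β N ((j : ℕ) + 1))
      = (ee (β N ((s : ℕ) + 1)) - 1) / (2 * N) := by
    simp only [ee_β_eq_stdAddChar]
    rw [div_eq_inv_mul]
    exact congrFun hsol s
  refine ⟨h1, ?_⟩
  simpa only [map_sum, map_mul, conj_ofReal, conj_ee, map_div₀, map_sub, map_one, map_ofNat,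
    map_natCast] using congrArg (starRingEnd ℂ) h1

theorem invA_exp_sum (N : ℕ) (hN : 1 ≤ N) (s : Fin N) :
    (∑ j : Fin N, ((matA N)⁻¹ s j : ℂ) * ee (β N ((j : ℕ) + 1))
        = (ee (β N ((s : ℕ) + 1)) - 1) / (2 * N)) ∧
    (∑ j : Fin N, ((matA N)⁻¹ s j : ℂ) * ee (-(β N ((j : ℕ) + 1)))
        = (ee (-(β N ((s : ℕ) + 1))) - 1) / (2 * N)) :=
  invA_exp_sum_general N s
end

section
/- With A, (a^{ij}) = A^{-1}, and β_j = 2πj/(N+1) as above, ∑_{s,t=1}^{N} a^{st} e^{iβ_s} e^{-iβ_t} = (N+1)/(2N). -/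
open Real Complex Finset Matrix

noncomputable def zetaC (N : ℕ) : ℂ := Complex.exp (2 * (π:ℝ) * Complex.I / (N+1))

-- geometric sum vanishes
lemma lem_geom' (n : ℕ) (w : ℂ) (hw : w ^ n = 1) (hw1 : w ≠ 1) :
    ∑ k ∈ range n, w ^ k = 0 := by
  rw [geom_sum_eq hw1, hw, sub_self, zero_div]

-- telescoping: (x-1) * ∑ k x^k = n
lemma lem_u (n : ℕ) (x : ℂ) (hx : x ^ n = 1) (hx1 : x ≠ 1) :
    (x - 1) * ∑ k ∈ range n, (k : ℂ) * x ^ k = n := by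
  have htel : ∑ k ∈ range n, (((k:ℂ)+1) * x ^ (k+1) - (k:ℂ) * x ^ k) = (n:ℂ) * x ^ n - 0 := by
    have := Finset.sum_range_sub (fun k => (k:ℂ) * x ^ k) n
    push_cast at this ⊢
    convert this using 2 <;> ring
  have hgeom := lem_geom' n x hx hx1
  have hexp : ∑ k ∈ range n, (((k:ℂ)+1) * x ^ (k+1) - (k:ℂ) * x ^ k)
      = (x - 1) * (∑ k ∈ range n, (k : ℂ) * x ^ k) + x * ∑ k ∈ range n, x ^ k := by
    rw [Finset.mul_sum, Finset.mul_sum, ← Finset.sum_add_distrib]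
    apply Finset.sum_congr rfl
    intro k _; ring
  rw [hexp] at htel
  rw [hgeom, mul_zero, add_zero] at htel
  rw [htel, hx]; ring

-- telescoping: (x-1) * ∑ k² x^k = n² - 2 x u(x)
lemma lem_u2 (n : ℕ) (x : ℂ) (hx : x ^ n = 1) (hx1 : x ≠ 1) :
    (x - 1) * ∑ k ∈ range n, (k : ℂ)^2 * x ^ k
      = (n:ℂ)^2 - 2 * x * ∑ k ∈ range n, (k : ℂ) * x ^ k := by
  have htel := Finset.sum_range_sub (fun k => (k:ℂ)^2 * x ^ k) n
  push_cast at htel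
  have hgeom := lem_geom' n x hx hx1
  have hexp : ∑ k ∈ range n, (((k:ℂ)+1)^2 * x ^ (k+1) - (k:ℂ)^2 * x ^ k)
      = (x - 1) * (∑ k ∈ range n, (k : ℂ)^2 * x ^ k)
        + 2 * x * (∑ k ∈ range n, (k : ℂ) * x ^ k) + x * ∑ k ∈ range n, x ^ k := by
    rw [Finset.mul_sum, Finset.mul_sum, Finset.mul_sum, ← Finset.sum_add_distrib,
      ← Finset.sum_add_distrib]
    apply Finset.sum_congr rfl
    intro k _; push_cast; ring
  rw [hexp] at htel
  rw [hgeom, mul_zero, add_zero] at htel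
  have : (x - 1) * (∑ k ∈ range n, (k : ℂ)^2 * x ^ k)
      = (n:ℂ)^2 * x ^ n - (0:ℂ)^2 * x^0 - 2 * x * (∑ k ∈ range n, (k : ℂ) * x ^ k) := by
    rw [← htel]; ring
  rw [this, hx]; ring

-- lambda sum: (x-1)² ∑ 2k(n-k) x^k = 4 n x   (careful: n - k in ℕ; use k ∈ range n so k ≤ n)
lemma lem_lam (n : ℕ) (x : ℂ) (hx : x ^ n = 1) (hx1 : x ≠ 1) :
    (x - 1)^2 * ∑ k ∈ range n, (2 * (k:ℂ) * ((n:ℂ) - k)) * x ^ k = 4 * n * x := by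
  have h1 := lem_u n x hx hx1
  have h2 := lem_u2 n x hx hx1
  have hsplit : ∑ k ∈ range n, (2 * (k:ℂ) * ((n:ℂ) - k)) * x ^ k
      = 2 * (n:ℂ) * (∑ k ∈ range n, (k:ℂ) * x ^ k) - 2 * ∑ k ∈ range n, (k:ℂ)^2 * x ^ k := by
    rw [Finset.mul_sum, Finset.mul_sum, ← Finset.sum_sub_distrib]
    apply Finset.sum_congr rfl; intro k _; ring
  rw [hsplit]
  have : (x-1)^2 * (2 * (n:ℂ) * (∑ k ∈ range n, (k:ℂ) * x ^ k) - 2 * ∑ k ∈ range n, (k:ℂ)^2 * x ^ k)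
      = 2 * (n:ℂ) * (x-1) * ((x-1) * ∑ k ∈ range n, (k:ℂ) * x ^ k)
        - 2*(x-1) * ((x-1) * ∑ k ∈ range n, (k:ℂ)^2 * x ^ k) := by ring
  rw [this, h1, h2]
  have : 2 * (n:ℂ) * (x - 1) * ↑n - 2 * (x - 1) * ((n:ℂ) ^ 2 - 2 * x * (∑ k ∈ range n, (k:ℂ) * x ^ k))
      = 4 * x * ((x-1) * ∑ k ∈ range n, (k:ℂ) * x ^ k) := by ring
  rw [this, h1]; ring

lemma lem_sumk (n : ℕ) : ∑ k ∈ range n, (k:ℂ) = n * (n - 1) / 2 := by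
  induction n with
  | zero => simp
  | succ m ih => rw [Finset.sum_range_succ, ih]; push_cast; ring

lemma lem_sumk2 (n : ℕ) : ∑ k ∈ range n, (k:ℂ)^2 = n * (n - 1) * (2*n - 1) / 6 := by
  induction n with
  | zero => simp
  | succ m ih => rw [Finset.sum_range_succ, ih]; push_cast; ring

lemma lem_lam1 (n : ℕ) :
    ∑ k ∈ range n, (2 * (k:ℂ) * ((n:ℂ) - k)) * (1:ℂ) ^ k = n * ((n:ℂ)^2 - 1) / 3 := by
  have hsplit : ∑ k ∈ range n, (2 * (k:ℂ) * ((n:ℂ) - k)) * (1:ℂ) ^ k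
      = 2 * (n:ℂ) * (∑ k ∈ range n, (k:ℂ)) - 2 * ∑ k ∈ range n, (k:ℂ)^2 := by
    rw [Finset.mul_sum, Finset.mul_sum, ← Finset.sum_sub_distrib]
    apply Finset.sum_congr rfl; intro k _; ring
  rw [hsplit, lem_sumk, lem_sumk2]; ring

lemma zeta_prim (N : ℕ) : IsPrimitiveRoot (zetaC N) (N+1) := by
  have := Complex.isPrimitiveRoot_exp (N+1) (by omega)
  simpa [zetaC] using this

lemma halfangle (u : ℝ) : 2 - 2 * Real.cos (2*u) = 4 * Real.sin u ^ 2 := by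
  have h1 := Real.cos_two_mul u
  have h2 := Real.sin_sq_add_cos_sq u
  nlinarith

lemma Ncast_ne (N : ℕ) : ((N:ℂ)+1) ≠ 0 := by
  have : ((N+1:ℕ):ℂ) ≠ 0 := Nat.cast_ne_zero.mpr (by omega)
  push_cast at this; exact this

lemma entry_formula (N : ℕ) (s t : Fin N) :
    ((matA N s t : ℝ) : ℂ)
      = (1/((N:ℂ)+1)) * ∑ k ∈ range (N+1),
          (2 * (k:ℂ) * (((N:ℂ)+1) - k)) * ((zetaC N)^((s:ℕ)+1) * ((zetaC N)⁻¹)^((t:ℕ)+1))^k := by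
  have hprim := zeta_prim N
  have hzn : (zetaC N) ^ (N+1) = 1 := hprim.pow_eq_one
  have hz0 : zetaC N ≠ 0 := Complex.exp_ne_zero _
  have hne : ((N:ℂ)+1) ≠ 0 := Ncast_ne N
  set ζ := zetaC N with hζ
  set x := ζ^((s:ℕ)+1) * (ζ⁻¹)^((t:ℕ)+1) with hxdef
  have hxn : x ^ (N+1) = 1 := by
    rw [hxdef, mul_pow, ← pow_mul, ← pow_mul, mul_comm ((s:ℕ)+1), mul_comm ((t:ℕ)+1),
      pow_mul, pow_mul, hzn, inv_pow, hzn]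
    simp
  by_cases hst : s = t
  · -- diagonal
    subst hst
    have hx1 : x = 1 := by
      rw [hxdef, ← mul_pow, mul_inv_cancel₀ hz0, one_pow]
    have hl1 := lem_lam1 (N+1)
    push_cast at hl1
    rw [hx1, hl1]
    simp only [matA, if_pos rfl]
    push_cast
    field_simp
    ring
  · -- off-diagonal
    have hb : ζ^((t:ℕ)+1) ≠ 0 := pow_ne_zero _ hz0
    have hx1 : x ≠ 1 := by
      intro h
      rw [hxdef, inv_pow] at h
      have h2 : ζ^((s:ℕ)+1) = ζ^((t:ℕ)+1) := (mul_inv_eq_one₀ hb).mp h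
      have := hprim.pow_inj (by omega : (s:ℕ)+1 < N+1) (by omega : (t:ℕ)+1 < N+1) h2
      exact hst (Fin.ext (by omega))
    set y := ζ^((t:ℕ)+1) * (ζ⁻¹)^((s:ℕ)+1) with hydef
    have hxy : x * y = 1 := by
      rw [hxdef, hydef, inv_pow, inv_pow]
      field_simp
    set θ : ℝ := ((s:ℝ) - (t:ℝ)) * (2*π) / (N+1) with hθdef
    have hθc : (θ:ℂ) = (((s:ℕ):ℂ) - ((t:ℕ):ℂ)) * (2*(π:ℂ)) / ((N:ℂ)+1) := by
      rw [hθdef]; push_cast; ring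
    have hxexp : x = Complex.exp ((θ:ℂ) * Complex.I) := by
      rw [hxdef, hζ, zetaC, ← Complex.exp_nat_mul, ← Complex.exp_neg, ← Complex.exp_nat_mul,
        ← Complex.exp_add]
      congr 1
      rw [hθc]
      push_cast
      field_simp
      ring
    have hyexp : y = Complex.exp (-((θ:ℂ) * Complex.I)) := by
      rw [hydef, hζ, zetaC, ← Complex.exp_nat_mul, ← Complex.exp_neg, ← Complex.exp_nat_mul,
        ← Complex.exp_add]
      congr 1
      rw [hθc]
      push_cast
      field_simp
      ring
    have hsum : x + y = 2 * Complex.cos (θ:ℂ) := by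
      rw [hxexp, hyexp, Complex.exp_mul_I, ← neg_mul, Complex.exp_mul_I, Complex.cos_neg,
        Complex.sin_neg]
      ring
    have hprod : (1 - x) * (1 - y) = ((2 - 2 * Real.cos θ : ℝ) : ℂ) := by
      push_cast
      linear_combination -hsum + hxy
    set m : ℕ := (((s : ℕ) : ℤ) - ((t : ℕ) : ℤ)).natAbs with hmdef
    have habs : (m : ℝ) = |(s:ℝ) - (t:ℝ)| := by
      rw [hmdef, Nat.cast_natAbs, Int.cast_abs]
      push_cast
      ring_nf
    have hsinval : (2 - 2 * Real.cos θ : ℝ) = 4 * Real.sin ((m:ℝ) * π / (N+1)) ^ 2 := by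
      have h2u : θ = 2 * (((s:ℝ) - (t:ℝ)) * π / (N+1)) := by rw [hθdef]; ring
      rw [h2u, halfangle]
      rcases abs_cases ((s:ℝ) - (t:ℝ)) with ⟨h, _⟩ | ⟨h, _⟩
      · rw [habs, h]
      · rw [habs, h,
          show (-((s:ℝ) - (t:ℝ))) * π / (N+1) = -(((s:ℝ) - (t:ℝ)) * π / (N+1)) by ring,
          Real.sin_neg]
        ring
    have hm1 : 1 ≤ m := by
      rcases Nat.eq_zero_or_pos m with h0 | h; swap; · exact h
      exfalso
      rw [hmdef] at h0
      have : ((s:ℕ):ℤ) = ((t:ℕ):ℤ) := by omega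
      exact hst (Fin.ext (by omega))
    have hmN : m ≤ N := by
      rw [hmdef]
      have hs := s.isLt; have ht := t.isLt
      omega
    have hsinpos : 0 < Real.sin ((m:ℝ) * π / (N+1)) := by
      apply Real.sin_pos_of_pos_of_lt_pi
      · apply div_pos
        · have : (0:ℝ) < m := by exact_mod_cast hm1
          nlinarith [Real.pi_pos]
        · positivity
      · rw [div_lt_iff₀ (by positivity)]
        have : (m:ℝ) < (N:ℝ)+1 := by exact_mod_cast Nat.lt_succ_of_le hmN
        nlinarith [Real.pi_pos]
    have hsinne : Real.sin ((m:ℝ) * π / (N+1)) ≠ 0 := ne_of_gt hsinpos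
    have hddsin : ((dd N m : ℝ) : ℂ) * ((4 * Real.sin ((m:ℝ) * π / (N+1)) ^ 2 : ℝ) : ℂ) = 4 := by
      rw [← Complex.ofReal_mul,
        show (dd N m) * (4 * Real.sin ((m:ℝ) * π / (N+1)) ^ 2) = 4 by rw [dd]; field_simp]
      norm_num
    have hsq : (x - 1)^2 = -x * ((1-x)*(1-y)) := by
      linear_combination (x - 1) * hxy
    have hdd4 : ((dd N m : ℝ):ℂ) * (x-1)^2 = -(4*x) := by
      rw [hsq, hprod, show ((2 - 2 * Real.cos θ : ℝ):ℂ)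
          = ((4 * Real.sin ((m:ℝ) * π / (N+1)) ^ 2 : ℝ) : ℂ) by rw [hsinval]]
      linear_combination (-x) * hddsin
    have hlam := lem_lam (N+1) x hxn hx1
    push_cast at hlam
    have hx1' : x - 1 ≠ 0 := sub_ne_zero.mpr hx1
    simp only [matA, if_neg hst]
    rw [← hmdef]
    push_cast
    clear_value x y
    have hSval : ∑ k ∈ range (N+1), (2*(k:ℂ)*(((N:ℂ)+1) - k)) * x^k
        = 4*((N:ℂ)+1)*x/(x-1)^2 := by
      rw [eq_div_iff (pow_ne_zero 2 hx1')]
      linear_combination hlam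
    rw [hSval]
    field_simp
    linear_combination (-1:ℂ) * hdd4

lemma lem_gsum (N : ℕ) (w : ℂ) (hw : w ^ (N+1) = 1) :
    ∑ t : Fin N, w ^ ((t:ℕ)+1) = (if w = 1 then ((N:ℂ)+1) else 0) - 1 := by
  by_cases h1 : w = 1
  · simp [h1]
  · rw [if_neg h1]
    have h0 := lem_geom' (N+1) w hw h1
    rw [Finset.sum_range_succ' (fun k => w ^ k) N] at h0
    have : ∑ t : Fin N, w ^ ((t:ℕ)+1) = ∑ k ∈ range N, w ^ (k+1) :=
      Fin.sum_univ_eq_sum_range (fun i => w ^ (i+1)) N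
    rw [this]
    simp only [pow_zero] at h0
    linear_combination h0

lemma zeta_pow_N (N : ℕ) : (zetaC N) ^ N = (zetaC N)⁻¹ := by
  have hzn := (zeta_prim N).pow_eq_one
  have hz0 : zetaC N ≠ 0 := Complex.exp_ne_zero _
  have h1 : zetaC N ^ N * zetaC N = 1 := by rw [← pow_succ]; exact hzn
  exact eq_inv_of_mul_eq_one_left h1

lemma row_solution (N : ℕ) (hN : 1 ≤ N) (s : Fin N) :
    ∑ t : Fin N, ((matA N s t : ℝ):ℂ) * ((((zetaC N)⁻¹)^((t:ℕ)+1) - 1)/(2*(N:ℂ)))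
      = ((zetaC N)⁻¹)^((s:ℕ)+1) := by
  have hprim := zeta_prim N
  have hzn : (zetaC N) ^ (N+1) = 1 := hprim.pow_eq_one
  set ζ := zetaC N with hζ
  set η := ζ⁻¹ with hηdef
  have hηprim : IsPrimitiveRoot η (N+1) := hprim.inv
  have hηn : η ^ (N+1) = 1 := hηprim.pow_eq_one
  have hηj : ∀ j : ℕ, η ^ j = 1 ↔ (N+1) ∣ j := fun j => hηprim.pow_eq_one_iff_dvd j
  have hNne : ((N:ℂ)) ≠ 0 := by
    exact_mod_cast Nat.cast_ne_zero.mpr (by omega)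
  have hne := Ncast_ne N
  -- rewrite entries
  have step1 : ∑ t : Fin N, ((matA N s t : ℝ):ℂ) * ((η^((t:ℕ)+1) - 1)/(2*(N:ℂ)))
      = ∑ k ∈ range (N+1), (1/((N:ℂ)+1)) * (1/(2*(N:ℂ))) * (2 * (k:ℂ) * (((N:ℂ)+1) - k))
          * (∑ t : Fin N, (ζ^((s:ℕ)+1) * η^((t:ℕ)+1))^k * (η^((t:ℕ)+1) - 1)) := by
    calc ∑ t : Fin N, ((matA N s t : ℝ):ℂ) * ((η^((t:ℕ)+1) - 1)/(2*(N:ℂ)))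
        = ∑ t : Fin N, ∑ k ∈ range (N+1),
            (1/((N:ℂ)+1)) * (1/(2*(N:ℂ))) * (2 * (k:ℂ) * (((N:ℂ)+1) - k))
              * ((ζ^((s:ℕ)+1) * η^((t:ℕ)+1))^k * (η^((t:ℕ)+1) - 1)) := by
          apply Finset.sum_congr rfl
          intro t _
          rw [entry_formula N s t, ← hζ, ← hηdef, mul_assoc, Finset.sum_mul, Finset.mul_sum]
          apply Finset.sum_congr rfl
          intro k _
          ring
      _ = ∑ k ∈ range (N+1), ∑ t : Fin N,
            (1/((N:ℂ)+1)) * (1/(2*(N:ℂ))) * (2 * (k:ℂ) * (((N:ℂ)+1) - k))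
              * ((ζ^((s:ℕ)+1) * η^((t:ℕ)+1))^k * (η^((t:ℕ)+1) - 1)) := Finset.sum_comm
      _ = _ := by
          apply Finset.sum_congr rfl
          intro k _
          rw [← Finset.mul_sum]
  rw [step1]
  -- inner sums
  have hinner : ∀ k : ℕ, ∑ t : Fin N, (ζ^((s:ℕ)+1) * η^((t:ℕ)+1))^k * (η^((t:ℕ)+1) - 1)
      = ζ^(((s:ℕ)+1)*k) *
        ((if (N+1) ∣ (k+1) then ((N:ℂ)+1) else 0) - (if (N+1) ∣ k then ((N:ℂ)+1) else 0)) := by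
    intro k
    have hterm : ∀ t : Fin N, (ζ^((s:ℕ)+1) * η^((t:ℕ)+1))^k * (η^((t:ℕ)+1) - 1)
        = ζ^(((s:ℕ)+1)*k) * ((η^(k+1))^((t:ℕ)+1) - (η^k)^((t:ℕ)+1)) := by
      intro t
      rw [mul_pow, ← pow_mul, ← pow_mul]
      rw [show (η^(k+1))^((t:ℕ)+1) = η^((k+1)*((t:ℕ)+1)) from (pow_mul η (k+1) ((t:ℕ)+1)).symm,
        show (η^k)^((t:ℕ)+1) = η^(k*((t:ℕ)+1)) from (pow_mul η k ((t:ℕ)+1)).symm]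
      rw [show ((t:ℕ)+1)*k = k*((t:ℕ)+1) by ring, show (k+1)*((t:ℕ)+1) = k*((t:ℕ)+1)+((t:ℕ)+1) by ring,
        pow_add]
      ring
    calc ∑ t : Fin N, (ζ^((s:ℕ)+1) * η^((t:ℕ)+1))^k * (η^((t:ℕ)+1) - 1)
        = ∑ t : Fin N, ζ^(((s:ℕ)+1)*k) * ((η^(k+1))^((t:ℕ)+1) - (η^k)^((t:ℕ)+1)) :=
          Finset.sum_congr rfl (fun t _ => hterm t)
      _ = ζ^(((s:ℕ)+1)*k) * ((∑ t : Fin N, (η^(k+1))^((t:ℕ)+1)) - ∑ t : Fin N, (η^k)^((t:ℕ)+1)) := by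
          rw [← Finset.mul_sum, Finset.sum_sub_distrib]
      _ = _ := by
          rw [lem_gsum N _ (by rw [← pow_mul, mul_comm, pow_mul, hηn, one_pow]),
            lem_gsum N _ (by rw [← pow_mul, mul_comm, pow_mul, hηn, one_pow])]
          rw [if_congr (hηj (k+1)) rfl rfl, if_congr (hηj k) rfl rfl]
          ring
  have step2 : ∑ k ∈ range (N+1), (1/((N:ℂ)+1)) * (1/(2*(N:ℂ))) * (2 * (k:ℂ) * (((N:ℂ)+1) - k))
          * (∑ t : Fin N, (ζ^((s:ℕ)+1) * η^((t:ℕ)+1))^k * (η^((t:ℕ)+1) - 1))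
      = η^((s:ℕ)+1) := by
    have hnd : ∀ a : ℕ, 0 < a → a < N+1 → ¬ ((N+1) ∣ a) :=
      fun a h1 h2 hdvd => absurd (Nat.le_of_dvd h1 hdvd) (by omega)
    rw [Finset.sum_eq_single_of_mem N (by simp)]
    · rw [hinner N]
      rw [if_pos ⟨1, by ring⟩, if_neg (hnd N (by omega) (by omega))]
      have hζN : ζ^(((s:ℕ)+1)*N) = η^((s:ℕ)+1) := by
        rw [mul_comm, pow_mul, zeta_pow_N N]
      rw [hζN]
      push_cast
      field_simp
      ring
    · intro k hk hkN
      rw [hinner k]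
      simp only [Finset.mem_range] at hk
      by_cases hk0 : k = 0
      · subst hk0; simp
      · rw [if_neg (hnd (k+1) (by omega) (by omega)), if_neg (hnd k (by omega) (by omega))]
        ring
  rw [step2]

lemma lem_geomfull (n : ℕ) (w : ℂ) (hw : w ^ n = 1) :
    ∑ k ∈ range n, w ^ k = if w = 1 then (n:ℂ) else 0 := by
  by_cases h1 : w = 1
  · simp [h1]
  · rw [if_neg h1]; exact lem_geom' n w hw h1

lemma detA_ne (N : ℕ) (hN : 1 ≤ N) : (matA N).det ≠ 0 := by
  intro hdet
  obtain ⟨y, hy0, hAy⟩ := Matrix.exists_mulVec_eq_zero_iff.mpr hdet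
  have hprim := zeta_prim N
  have hzn : (zetaC N) ^ (N+1) = 1 := hprim.pow_eq_one
  set ζ := zetaC N with hζ
  set η := ζ⁻¹ with hηdef
  have hηprim : IsPrimitiveRoot η (N+1) := hprim.inv
  have hηn : η ^ (N+1) = 1 := hηprim.pow_eq_one
  have hne := Ncast_ne N
  set yc : Fin N → ℂ := fun t => ((y t : ℝ) : ℂ) with hycdef
  have hrow : ∀ s : Fin N, ∑ t : Fin N, ((matA N s t : ℝ):ℂ) * yc t = 0 := by
    intro s
    have h1 : ∑ t : Fin N, (matA N) s t * y t = 0 := by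
      have := congrFun hAy s
      simpa [Matrix.mulVec, dotProduct] using this
    calc ∑ t : Fin N, ((matA N s t : ℝ):ℂ) * yc t
        = ((∑ t : Fin N, (matA N) s t * y t : ℝ) : ℂ) := by push_cast; rfl
      _ = 0 := by rw [h1]; norm_num
  set Z : ℕ → ℂ := fun k => ∑ t : Fin N, yc t * (η^((t:ℕ)+1))^k with hZdef
  -- rows in Fourier form
  have hrow2 : ∀ s : Fin N,
      ∑ k ∈ range (N+1), (2 * (k:ℂ) * (((N:ℂ)+1) - k)) * (ζ^((s:ℕ)+1))^k * Z k = 0 := by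
    intro s
    have h2 : ∑ t : Fin N, ((matA N s t : ℝ):ℂ) * yc t
        = (1/((N:ℂ)+1)) * ∑ k ∈ range (N+1),
            (2 * (k:ℂ) * (((N:ℂ)+1) - k)) * (ζ^((s:ℕ)+1))^k * Z k := by
      calc ∑ t : Fin N, ((matA N s t : ℝ):ℂ) * yc t
          = ∑ t : Fin N, ∑ k ∈ range (N+1), (1/((N:ℂ)+1)) *
              ((2 * (k:ℂ) * (((N:ℂ)+1) - k)) * (ζ^((s:ℕ)+1))^k * (yc t * (η^((t:ℕ)+1))^k)) := by
            apply Finset.sum_congr rfl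
            intro t _
            rw [entry_formula N s t, ← hζ, ← hηdef, mul_assoc, Finset.sum_mul, Finset.mul_sum]
            apply Finset.sum_congr rfl
            intro k _
            rw [mul_pow]
            ring
        _ = ∑ k ∈ range (N+1), ∑ t : Fin N, (1/((N:ℂ)+1)) *
              ((2 * (k:ℂ) * (((N:ℂ)+1) - k)) * (ζ^((s:ℕ)+1))^k * (yc t * (η^((t:ℕ)+1))^k)) :=
            Finset.sum_comm
        _ = _ := by
            rw [Finset.mul_sum]
            apply Finset.sum_congr rfl
            intro k _
            rw [hZdef]
            rw [Finset.mul_sum, Finset.mul_sum]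
            try (apply Finset.sum_congr rfl; intro t _; ring)
    have h3 := hrow s
    rw [h2] at h3
    have := mul_eq_zero.mp h3
    rcases this with h | h
    · exact absurd h (by simp [hne])
    · exact h
  -- column combinations: n * lam k' * Z k' = C
  set C : ℂ := ∑ k ∈ range (N+1), (2 * (k:ℂ) * (((N:ℂ)+1) - k)) * Z k with hCdef
  have hcol : ∀ k' ∈ range (N+1),
      ((N:ℂ)+1) * ((2 * (k':ℂ) * (((N:ℂ)+1) - k')) * Z k') - C = 0 := by
    intro k' hk'
    simp only [Finset.mem_range] at hk'
    have h0 : ∑ s : Fin N, (η^k')^((s:ℕ)+1) *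
        (∑ k ∈ range (N+1), (2 * (k:ℂ) * (((N:ℂ)+1) - k)) * (ζ^((s:ℕ)+1))^k * Z k) = 0 := by
      apply Finset.sum_eq_zero
      intro s _
      rw [hrow2 s, mul_zero]
    have h1 : ∑ s : Fin N, (η^k')^((s:ℕ)+1) *
        (∑ k ∈ range (N+1), (2 * (k:ℂ) * (((N:ℂ)+1) - k)) * (ζ^((s:ℕ)+1))^k * Z k)
        = ∑ k ∈ range (N+1), (2 * (k:ℂ) * (((N:ℂ)+1) - k)) * Z k *
            (∑ s : Fin N, (ζ^k * η^k')^((s:ℕ)+1)) := by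
      calc ∑ s : Fin N, (η^k')^((s:ℕ)+1) *
          (∑ k ∈ range (N+1), (2 * (k:ℂ) * (((N:ℂ)+1) - k)) * (ζ^((s:ℕ)+1))^k * Z k)
          = ∑ s : Fin N, ∑ k ∈ range (N+1),
              (2 * (k:ℂ) * (((N:ℂ)+1) - k)) * Z k * (ζ^k * η^k')^((s:ℕ)+1) := by
            apply Finset.sum_congr rfl
            intro s _
            rw [Finset.mul_sum]
            apply Finset.sum_congr rfl
            intro k _
            have hswap : (ζ^((s:ℕ)+1))^k = (ζ^k)^((s:ℕ)+1) := by
              rw [← pow_mul, mul_comm, pow_mul]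
            rw [mul_pow, hswap]
            ring
        _ = _ := by
            rw [Finset.sum_comm]
            apply Finset.sum_congr rfl
            intro k _
            rw [← Finset.mul_sum]
    rw [h1] at h0
    have h2 : ∀ k ∈ range (N+1),
        (2 * (k:ℂ) * (((N:ℂ)+1) - k)) * Z k * (∑ s : Fin N, (ζ^k * η^k')^((s:ℕ)+1))
        = (2 * (k:ℂ) * (((N:ℂ)+1) - k)) * Z k *
            ((if k = k' then ((N:ℂ)+1) else 0) - 1) := by
      intro k hk
      simp only [Finset.mem_range] at hk
      have hwn : (ζ^k * η^k') ^ (N+1) = 1 := by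
        rw [mul_pow, ← pow_mul, ← pow_mul, mul_comm k, mul_comm k', pow_mul, pow_mul, hzn, hηn]
        simp
      rw [lem_gsum N _ hwn]
      congr 2
      apply if_congr _ rfl rfl
      constructor
      · intro h
        have hζk : ζ^k = ζ^k' := by
          have hb : ζ^k' ≠ 0 := pow_ne_zero _ (Complex.exp_ne_zero _)
          rw [hηdef, inv_pow] at h
          exact (mul_inv_eq_one₀ hb).mp h
        exact hprim.pow_inj (by omega) (by omega) hζk
      · intro h
        subst h
        rw [hηdef, inv_pow]
        exact mul_inv_cancel₀ (pow_ne_zero _ (Complex.exp_ne_zero _))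
    rw [Finset.sum_congr rfl h2] at h0
    have h3 : ∑ k ∈ range (N+1),
        (2 * (k:ℂ) * (((N:ℂ)+1) - k)) * Z k * ((if k = k' then ((N:ℂ)+1) else 0) - 1)
        = ((N:ℂ)+1) * ((2 * (k':ℂ) * (((N:ℂ)+1) - k')) * Z k') - C := by
      calc ∑ k ∈ range (N+1),
          (2 * (k:ℂ) * (((N:ℂ)+1) - k)) * Z k * ((if k = k' then ((N:ℂ)+1) else 0) - 1)
          = ∑ k ∈ range (N+1),
            ((if k = k' then (2 * (k:ℂ) * (((N:ℂ)+1) - k)) * Z k * ((N:ℂ)+1) else 0)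
              - (2 * (k:ℂ) * (((N:ℂ)+1) - k)) * Z k) := by
            apply Finset.sum_congr rfl
            intro k _
            by_cases h : k = k' <;> simp [h] <;> ring
        _ = (if k' ∈ range (N+1) then (2 * (k':ℂ) * (((N:ℂ)+1) - k')) * Z k' * ((N:ℂ)+1) else 0)
              - C := by
            rw [Finset.sum_sub_distrib, Finset.sum_ite_eq', hCdef]
        _ = _ := by
            rw [if_pos (Finset.mem_range.mpr hk')]
            ring
    rw [h3] at h0
    exact h0
  -- C = 0
  have hC0 : C = 0 := by
    have h := hcol 0 (by simp)
    push_cast at h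
    linear_combination -h
  -- Z k = 0 for 1 ≤ k ≤ N
  have hZk : ∀ k : ℕ, 1 ≤ k → k ≤ N → Z k = 0 := by
    intro k h1 h2
    have h := hcol k (Finset.mem_range.mpr (by omega))
    rw [hC0, sub_zero] at h
    have hlamne : (2 * (k:ℂ) * (((N:ℂ)+1) - k)) ≠ 0 := by
      have hk0 : (k:ℂ) ≠ 0 := Nat.cast_ne_zero.mpr (by omega)
      have hsub : ((N:ℂ)+1) - k = ((N+1-k : ℕ) : ℂ) := by
        push_cast [Nat.cast_sub (by omega : k ≤ N+1)]
        ring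
      have hsubne : ((N:ℂ)+1) - k ≠ 0 := by
        rw [hsub]
        exact Nat.cast_ne_zero.mpr (by omega)
      exact mul_ne_zero (mul_ne_zero two_ne_zero hk0) hsubne
    rcases mul_eq_zero.mp h with h' | h'
    · exact absurd h' hne
    · rcases mul_eq_zero.mp h' with h'' | h''
      · exact absurd h'' hlamne
      · exact h''
  -- yc is constant
  have hz0 : ζ ≠ 0 := Complex.exp_ne_zero _
  have hconst : ∀ τ : Fin N, ((N:ℂ)+1) * yc τ = Z 0 := by
    intro τ
    have way1 : ∑ k ∈ range (N+1), (ζ^((τ:ℕ)+1))^k * Z k = Z 0 := by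
      rw [Finset.sum_eq_single_of_mem 0 (by simp)]
      · simp
      · intro k hk hk0
        simp only [Finset.mem_range] at hk
        rw [hZk k (by omega) (by omega), mul_zero]
    have way2 : ∑ k ∈ range (N+1), (ζ^((τ:ℕ)+1))^k * Z k = ((N:ℂ)+1) * yc τ := by
      calc ∑ k ∈ range (N+1), (ζ^((τ:ℕ)+1))^k * Z k
          = ∑ k ∈ range (N+1), ∑ t : Fin N, yc t * (ζ^((τ:ℕ)+1) * η^((t:ℕ)+1))^k := by
            apply Finset.sum_congr rfl
            intro k _
            rw [hZdef, Finset.mul_sum]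
            apply Finset.sum_congr rfl
            intro t _
            rw [mul_pow]
            ring
        _ = ∑ t : Fin N, ∑ k ∈ range (N+1), yc t * (ζ^((τ:ℕ)+1) * η^((t:ℕ)+1))^k :=
            Finset.sum_comm
        _ = ∑ t : Fin N, (if t = τ then yc t * ((N:ℂ)+1) else 0) := by
            apply Finset.sum_congr rfl
            intro t _
            rw [← Finset.mul_sum]
            have hwn : (ζ^((τ:ℕ)+1) * η^((t:ℕ)+1)) ^ (N+1) = 1 := by
              rw [mul_pow, ← pow_mul, ← pow_mul, mul_comm ((τ:ℕ)+1), mul_comm ((t:ℕ)+1),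
                pow_mul, pow_mul, hzn, hηn]
              simp
            rw [lem_geomfull (N+1) _ hwn]
            have hiff : (ζ^((τ:ℕ)+1) * η^((t:ℕ)+1) = 1) ↔ (t = τ) := by
              constructor
              · intro h
                have hb : ζ^((t:ℕ)+1) ≠ 0 := pow_ne_zero _ hz0
                rw [hηdef, inv_pow] at h
                have h2 : ζ^((τ:ℕ)+1) = ζ^((t:ℕ)+1) := (mul_inv_eq_one₀ hb).mp h
                have := hprim.pow_inj (by omega : (τ:ℕ)+1 < N+1) (by omega : (t:ℕ)+1 < N+1) h2
                exact (Fin.ext (by omega)).symm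
              · intro h
                subst h
                rw [hηdef, inv_pow]
                exact mul_inv_cancel₀ (pow_ne_zero _ hz0)
            rw [if_congr hiff rfl rfl]
            by_cases h : t = τ <;> simp [h] <;> push_cast <;> ring
        _ = yc τ * ((N:ℂ)+1) := by
            rw [Finset.sum_ite_eq' Finset.univ τ (fun t => yc t * ((N:ℂ)+1)),
              if_pos (Finset.mem_univ τ)]
        _ = ((N:ℂ)+1) * yc τ := by ring
    rw [← way2, way1]
  -- conclude
  have hη1 : η ≠ 1 := by
    intro h
    have := (hηprim.pow_eq_one_iff_dvd 1).mp (by rw [pow_one, h])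
    have := Nat.le_of_dvd one_pos this
    omega
  have hZ1 : Z 1 = 0 := hZk 1 le_rfl hN
  have hZ1calc : ((N:ℂ)+1) * Z 1 = Z 0 * (-1) := by
    calc ((N:ℂ)+1) * Z 1 = ∑ t : Fin N, (((N:ℂ)+1) * yc t) * η^((t:ℕ)+1) := by
          rw [hZdef]
          simp only
          rw [Finset.mul_sum]
          apply Finset.sum_congr rfl
          intro t _
          rw [pow_one]
          ring
      _ = ∑ t : Fin N, Z 0 * η^((t:ℕ)+1) := by
          apply Finset.sum_congr rfl
          intro t _
          rw [hconst t]
      _ = Z 0 * (((if η = 1 then ((N:ℂ)+1) else 0)) - 1) := by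
          rw [← Finset.mul_sum, lem_gsum N η hηn]
      _ = Z 0 * (-1) := by
          rw [if_neg hη1]
          ring
  have hZ00 : Z 0 = 0 := by
    rw [hZ1, mul_zero] at hZ1calc
    linear_combination hZ1calc
  have hyczero : ∀ τ : Fin N, yc τ = 0 := by
    intro τ
    have := hconst τ
    rw [hZ00] at this
    rcases mul_eq_zero.mp this with h | h
    · exact absurd h hne
    · exact h
  apply hy0
  funext t
  have := hyczero t
  rw [hycdef] at this
  simpa using this

theorem invA_bilinear_conj (N : ℕ) (hN : 1 ≤ N) :
    ∑ s : Fin N, ∑ t : Fin N,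
      ((matA N)⁻¹ s t : ℂ) * ee (β N ((s : ℕ) + 1)) * ee (-(β N ((t : ℕ) + 1)))
      = ((N : ℂ) + 1) / (2 * N) := by
  have hprim := zeta_prim N
  have hzn : (zetaC N) ^ (N+1) = 1 := hprim.pow_eq_one
  set ζ := zetaC N with hζ
  set η := ζ⁻¹ with hηdef
  have hηn : η ^ (N+1) = 1 := hprim.inv.pow_eq_one
  have hne := Ncast_ne N
  have hNne : ((N:ℂ)) ≠ 0 := Nat.cast_ne_zero.mpr (by omega)
  have hee : ∀ j : ℕ, ee (β N j) = ζ^j := by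
    intro j
    rw [ee, hζ, zetaC, ← Complex.exp_nat_mul]
    congr 1
    rw [β]
    push_cast
    ring
  have heeneg : ∀ j : ℕ, ee (-(β N j)) = η^j := by
    intro j
    rw [ee, hηdef, hζ, zetaC, inv_pow, ← Complex.exp_nat_mul, ← Complex.exp_neg]
    congr 1
    rw [β]
    push_cast
    ring
  have hdetu : IsUnit (matA N).det := isUnit_iff_ne_zero.mpr (detA_ne N hN)
  have hBA : (matA N)⁻¹ * matA N = 1 := Matrix.nonsing_inv_mul _ hdetu
  have hζ1 : ζ ≠ 1 := by
    intro h
    have := (hprim.pow_eq_one_iff_dvd 1).mp (by rw [pow_one, h])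
    have := Nat.le_of_dvd one_pos this
    omega
  have hinner : ∀ s : Fin N, ∑ t : Fin N, (((matA N)⁻¹ s t : ℝ):ℂ) * η^((t:ℕ)+1)
      = (η^((s:ℕ)+1) - 1)/(2*(N:ℂ)) := by
    intro s
    calc ∑ t : Fin N, (((matA N)⁻¹ s t : ℝ):ℂ) * η^((t:ℕ)+1)
        = ∑ t : Fin N, (((matA N)⁻¹ s t : ℝ):ℂ) *
            (∑ r : Fin N, ((matA N t r : ℝ):ℂ) * ((η^((r:ℕ)+1) - 1)/(2*(N:ℂ)))) := by
          apply Finset.sum_congr rfl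
          intro t _
          congr 1
          rw [hηdef, hζ]
          exact (row_solution N hN t).symm
      _ = ∑ t : Fin N, ∑ r : Fin N, (((matA N)⁻¹ s t : ℝ):ℂ) * ((matA N t r : ℝ):ℂ) *
            ((η^((r:ℕ)+1) - 1)/(2*(N:ℂ))) := by
          apply Finset.sum_congr rfl
          intro t _
          rw [Finset.mul_sum]
          apply Finset.sum_congr rfl
          intro r _
          ring
      _ = ∑ r : Fin N, ∑ t : Fin N, (((matA N)⁻¹ s t : ℝ):ℂ) * ((matA N t r : ℝ):ℂ) *
            ((η^((r:ℕ)+1) - 1)/(2*(N:ℂ))) := Finset.sum_comm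
      _ = ∑ r : Fin N, (∑ t : Fin N, (((matA N)⁻¹ s t : ℝ):ℂ) * ((matA N t r : ℝ):ℂ)) *
            ((η^((r:ℕ)+1) - 1)/(2*(N:ℂ))) := by
          apply Finset.sum_congr rfl
          intro r _
          rw [Finset.sum_mul]
      _ = ∑ r : Fin N, ((((matA N)⁻¹ * matA N) s r : ℝ):ℂ) * ((η^((r:ℕ)+1) - 1)/(2*(N:ℂ))) := by
          apply Finset.sum_congr rfl
          intro r _
          congr 1
          rw [Matrix.mul_apply]
          push_cast
          rfl
      _ = ∑ r : Fin N, (if s = r then (1:ℂ) else 0) * ((η^((r:ℕ)+1) - 1)/(2*(N:ℂ))) := by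
          apply Finset.sum_congr rfl
          intro r _
          rw [hBA, Matrix.one_apply]
          by_cases h : s = r <;> simp [h]
      _ = _ := by
          rw [Finset.sum_congr rfl (fun r _ => by
            rw [show (if s = r then (1:ℂ) else 0) * ((η^((r:ℕ)+1) - 1)/(2*(N:ℂ)))
              = (if r = s then ((η^((r:ℕ)+1) - 1)/(2*(N:ℂ))) else 0) by
                by_cases h : s = r <;> simp [h, eq_comm]])]
          rw [Finset.sum_ite_eq' Finset.univ s (fun r => (η^((r:ℕ)+1) - 1)/(2*(N:ℂ))),
            if_pos (Finset.mem_univ s)]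
  calc ∑ s : Fin N, ∑ t : Fin N,
      ((matA N)⁻¹ s t : ℂ) * ee (β N ((s : ℕ) + 1)) * ee (-(β N ((t : ℕ) + 1)))
      = ∑ s : Fin N, ζ^((s:ℕ)+1) * ∑ t : Fin N, (((matA N)⁻¹ s t : ℝ):ℂ) * η^((t:ℕ)+1) := by
        apply Finset.sum_congr rfl
        intro s _
        rw [Finset.mul_sum]
        apply Finset.sum_congr rfl
        intro t _
        rw [hee ((s:ℕ)+1), heeneg ((t:ℕ)+1)]
        ring
    _ = ∑ s : Fin N, ζ^((s:ℕ)+1) * ((η^((s:ℕ)+1) - 1)/(2*(N:ℂ))) := by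
        apply Finset.sum_congr rfl
        intro s _
        rw [hinner s]
    _ = ∑ s : Fin N, (1 - ζ^((s:ℕ)+1))/(2*(N:ℂ)) := by
        apply Finset.sum_congr rfl
        intro s _
        have hcancel : ζ^((s:ℕ)+1) * η^((s:ℕ)+1) = 1 := by
          rw [hηdef, inv_pow]
          exact mul_inv_cancel₀ (pow_ne_zero _ (Complex.exp_ne_zero _))
        field_simp
        linear_combination hcancel
    _ = ((∑ _s : Fin N, (1:ℂ)) - ∑ s : Fin N, ζ^((s:ℕ)+1))/(2*(N:ℂ)) := by
        rw [← Finset.sum_div, Finset.sum_sub_distrib]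
    _ = ((N:ℂ) - (((if ζ = 1 then ((N:ℂ)+1) else 0)) - 1))/(2*(N:ℂ)) := by
        rw [lem_gsum N ζ hzn]
        congr 2
        simp
    _ = ((N : ℂ) + 1) / (2 * N) := by
        rw [if_neg hζ1]
        ring
end

section
/- Eigenvector identity: with β_j = 2πj/(N+1), d_m = 1/sin²(mπ/(N+1)), D = ∑ d_m, and A the N×N matrix with A_{ll}=D, A_{lj} = -d_{|l-j|}, one has −(d_N, d_{N-1}, ..., d_1)ᵀ + A·(e^{iβ_1},...,e^{iβ_N})ᵀ = 2N·(e^{iβ_1},...,e^{iβ_N})ᵀ. -/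
open Real Complex Finset Matrix

noncomputable def zt (n : ℕ) : ℂ := Complex.exp (2 * π * Complex.I / n)

lemma zt_pow_n (n : ℕ) (hn : 0 < n) : zt n ^ n = 1 := by
  have hn' : (n:ℂ) ≠ 0 := Nat.cast_ne_zero.mpr hn.ne'
  rw [zt, ← Complex.exp_nat_mul, mul_div_cancel₀ _ hn', Complex.exp_two_pi_mul_I]

lemma zt_pow_ne_one {n m : ℕ} (h0 : 0 < m) (h1 : m < n) : zt n ^ m ≠ 1 := by
  have hn0 : 0 < n := by omega
  have hn' : (n:ℂ) ≠ 0 := Nat.cast_ne_zero.mpr (by omega)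
  rw [zt, ← Complex.exp_nat_mul]
  intro h
  rw [Complex.exp_eq_one_iff] at h
  obtain ⟨k, hk⟩ := h
  have h2 : (2 * (π:ℂ) * Complex.I) ≠ 0 := by
    simp [Real.pi_ne_zero, Complex.I_ne_zero]
  have hmk : (m : ℂ) = k * n := by
    field_simp at hk
    linear_combination hk
  have hmk' : (m : ℤ) = k * n := by exact_mod_cast hmk
  have : (n:ℤ) ∣ m := ⟨k, by linarith [hmk']⟩
  have : n ∣ m := Int.ofNat_dvd.mp (by exact_mod_cast this)
  have := Nat.le_of_dvd h0 this
  omega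

lemma geom_zero_s11 {n : ℕ} {z : ℂ} (hz1 : z ≠ 1) (hzn : z ^ n = 1) :
    ∑ k ∈ range n, z ^ k = 0 := by
  rw [geom_sum_eq hz1, hzn, sub_self, zero_div]

lemma weighted_telescope (n : ℕ) (z : ℂ) :
    (1 - z) * ∑ k ∈ range n, ((k : ℂ) + 1) * z ^ k
      = (∑ k ∈ range n, z ^ k) - n * z ^ n := by
  induction n with
  | zero => simp
  | succ n ih =>
    rw [sum_range_succ, sum_range_succ, mul_add, ih]
    push_cast
    ring

lemma inv_one_sub {n m : ℕ} (h0 : 0 < m) (h1 : m < n) :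
    (1 - zt n ^ m)⁻¹ = -(1 / n) * ∑ k ∈ range n, ((k : ℂ) + 1) * (zt n ^ m) ^ k := by
  have hz1 := zt_pow_ne_one h0 h1
  have hzn : (zt n ^ m) ^ n = 1 := by
    rw [← pow_mul, mul_comm, pow_mul, zt_pow_n n (by omega), one_pow]
  have key := weighted_telescope n (zt n ^ m)
  rw [geom_zero_s11 hz1 hzn, hzn, mul_one, zero_sub] at key
  have hne : (1 : ℂ) - zt n ^ m ≠ 0 := sub_ne_zero_of_ne hz1.symm
  have hn : (n : ℂ) ≠ 0 := Nat.cast_ne_zero.mpr (by omega)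
  field_simp
  linear_combination key

lemma orth {n k k' : ℕ} (hk : k < n) (hk' : k' < n) :
    ∑ m ∈ range n, (zt n ^ (m * k)) * (zt n ^ (m * k'))⁻¹
      = if k = k' then (n : ℂ) else 0 := by
  have hn0 : 0 < n := by omega
  have hzt0 : zt n ≠ 0 := Complex.exp_ne_zero _
  by_cases h : k = k'
  · subst h
    simp only [if_pos rfl]
    have : ∀ m ∈ range n, (zt n ^ (m * k)) * (zt n ^ (m * k))⁻¹ = 1 := by
      intro m _
      exact mul_inv_cancel₀ (pow_ne_zero _ hzt0)
    rw [Finset.sum_congr rfl this, Finset.sum_const, card_range]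
    simp
  · simp only [if_neg h]
    set z : ℂ := zt n ^ k * (zt n ^ k')⁻¹ with hzdef
    have hterm : ∀ m ∈ range n, (zt n ^ (m * k)) * (zt n ^ (m * k'))⁻¹ = z ^ m := by
      intro m _
      rw [hzdef, mul_pow, ← pow_mul, inv_pow, ← pow_mul, mul_comm k m, mul_comm k' m]
    rw [Finset.sum_congr rfl hterm]
    have hzn : z ^ n = 1 := by
      rw [hzdef, mul_pow, inv_pow, ← pow_mul, ← pow_mul, mul_comm k n, mul_comm k' n,
        pow_mul, pow_mul, zt_pow_n n hn0, one_pow, one_pow, inv_one, mul_one]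
    have hz1 : z ≠ 1 := by
      intro hz
      have hkk : zt n ^ k = zt n ^ k' := by
        field_simp [hzdef] at hz
        rw [hzdef] at hz
        exact (mul_inv_eq_one₀ (pow_ne_zero _ hzt0)).mp hz
      rcases Nat.lt_or_ge k k' with hlt | hge
      · have : zt n ^ (k' - k) = 1 := by
          have := hkk.symm
          rw [show k' = (k' - k) + k by omega, pow_add] at this
          exact mul_right_cancel₀ (pow_ne_zero _ hzt0) (by rw [this, one_mul])
        exact zt_pow_ne_one (by omega) (by omega) this
      · have hlt : k' < k := by omega
        have : zt n ^ (k - k') = 1 := by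
          rw [show k = (k - k') + k' by omega, pow_add] at hkk
          exact mul_right_cancel₀ (pow_ne_zero _ hzt0) (by rw [hkk, one_mul])
        exact zt_pow_ne_one (by omega) (by omega) this
    exact geom_zero_s11 hz1 hzn

lemma sum_k1 (n : ℕ) : ∑ k ∈ range n, ((k : ℂ) + 1) = (n : ℂ) * ((n : ℂ) + 1) / 2 := by
  induction n with
  | zero => simp
  | succ n ih => rw [sum_range_succ, ih]; push_cast; ring

lemma sum_k2 (n : ℕ) : ∑ k ∈ range n, ((k : ℂ) + 1) ^ 2 = (n : ℂ) * ((n : ℂ) + 1) * (2 * (n : ℂ) + 1) / 6 := by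
  induction n with
  | zero => simp
  | succ n ih => rw [sum_range_succ, ih]; push_cast; ring

lemma sumT (n : ℕ) (hn : 2 ≤ n) :
    ∑ m ∈ Ico 1 n, ((1 - zt n ^ m)⁻¹ * (1 - zt n ^ (n - m))⁻¹)
      = ((n : ℂ) ^ 2 - 1) / 12 := by
  have hn0 : 0 < n := by omega
  have hnC : (n : ℂ) ≠ 0 := Nat.cast_ne_zero.mpr (by omega)
  have hzt0 : zt n ≠ 0 := Complex.exp_ne_zero _
  set P : ℕ → ℂ := fun m =>
    (∑ k ∈ range n, ((k : ℂ) + 1) * zt n ^ (m * k)) *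
    (∑ k' ∈ range n, ((k' : ℂ) + 1) * (zt n ^ (m * k'))⁻¹) with hP
  have hterm : ∀ m ∈ Ico 1 n,
      (1 - zt n ^ m)⁻¹ * (1 - zt n ^ (n - m))⁻¹ = (1 / n) ^ 2 * P m := by
    intro m hm
    rw [Finset.mem_Ico] at hm
    have h1 := inv_one_sub (n := n) (m := m) (by omega) (by omega)
    have h2 := inv_one_sub (n := n) (m := n - m) (by omega) (by omega)
    rw [h1, h2, hP]
    have hpow : ∀ k : ℕ, (zt n ^ (n - m)) ^ k = (zt n ^ (m * k))⁻¹ := by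
      intro k
      rw [← pow_mul]
      have hmul : zt n ^ ((n - m) * k) * zt n ^ (m * k) = 1 := by
        rw [← pow_add, ← add_mul, Nat.sub_add_cancel (le_of_lt hm.2), pow_mul,
          zt_pow_n n hn0, one_pow]
      exact eq_inv_of_mul_eq_one_left hmul
    have hpow2 : ∀ k : ℕ, (zt n ^ m) ^ k = zt n ^ (m * k) := fun k => (pow_mul _ _ _).symm
    simp only [hpow, hpow2]
    ring
  rw [Finset.sum_congr rfl hterm, ← Finset.mul_sum]
  have hsplit : ∑ m ∈ Ico 1 n, P m = (∑ m ∈ range n, P m) - P 0 := by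
    rw [Finset.range_eq_Ico, Finset.sum_eq_sum_Ico_succ_bot hn0]
    ring
  have hswap : ∑ m ∈ range n, P m
      = ∑ k ∈ range n, ∑ k' ∈ range n, ∑ m ∈ range n,
          ((((k : ℂ) + 1) * zt n ^ (m * k)) * (((k' : ℂ) + 1) * (zt n ^ (m * k'))⁻¹)) := by
    simp only [hP, Finset.sum_mul_sum]
    rw [Finset.sum_comm]
    exact Finset.sum_congr rfl fun k _ => Finset.sum_comm
  have hinner : ∀ k ∈ range n, ∀ k' ∈ range n,
      ∑ m ∈ range n, ((((k : ℂ) + 1) * zt n ^ (m * k)) * (((k' : ℂ) + 1) * (zt n ^ (m * k'))⁻¹))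
        = ((k : ℂ) + 1) * ((k' : ℂ) + 1) * (if k = k' then (n : ℂ) else 0) := by
    intro k hk k' hk'
    rw [mem_range] at hk hk'
    rw [← orth hk hk', Finset.mul_sum]
    exact Finset.sum_congr rfl fun m _ => by ring
  have hsum : ∑ m ∈ range n, P m
      = (n : ℂ) * ((n : ℂ) * ((n : ℂ) + 1) * (2 * (n : ℂ) + 1) / 6) := by
    rw [hswap]
    rw [Finset.sum_congr rfl (fun k hk => Finset.sum_congr rfl (fun k' hk' => hinner k hk k' hk'))]
    have : ∀ k ∈ range n, ∑ k' ∈ range n,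
        (((k : ℂ) + 1) * ((k' : ℂ) + 1) * (if k = k' then (n : ℂ) else 0))
        = ((k : ℂ) + 1) ^ 2 * n := by
      intro k hk
      rw [Finset.sum_eq_single k]
      · rw [if_pos rfl]; ring
      · intro k' _ hne; rw [if_neg (Ne.symm hne), mul_zero]
      · intro h; exact absurd hk h
    rw [Finset.sum_congr rfl this, ← Finset.sum_mul, sum_k2]
    ring
  have hP0 : P 0 = ((n : ℂ) * ((n : ℂ) + 1) / 2) ^ 2 := by
    simp only [hP, Nat.zero_mul, pow_zero, inv_one, mul_one, sum_k1]
    ring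
  rw [hsplit, hsum, hP0]
  field_simp
  ring

lemma prod_eq {n m : ℕ} (h0 : 0 < m) (h1 : m < n) :
    (1 - zt n ^ m) * (1 - zt n ^ (n - m))
      = 4 * Complex.sin ((((m : ℝ) * π / n : ℝ)) : ℂ) ^ 2 := by
  have hn0 : 0 < n := by omega
  set θ : ℂ := (((m : ℝ) * π / n : ℝ) : ℂ) with hθ
  set b : ℂ := Complex.exp (θ * Complex.I) with hb
  have hb0 : b ≠ 0 := Complex.exp_ne_zero _
  have h2 : zt n ^ m = b ^ 2 := by
    rw [zt, ← Complex.exp_nat_mul, hb, ← Complex.exp_nat_mul]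
    congr 1
    rw [hθ]
    push_cast
    ring
  have h3 : zt n ^ (n - m) = (b ^ 2)⁻¹ := by
    rw [← h2]
    have hmul : zt n ^ (n - m) * zt n ^ m = 1 := by
      rw [← pow_add, Nat.sub_add_cancel (le_of_lt h1), zt_pow_n n hn0]
    exact eq_inv_of_mul_eq_one_left hmul
  rw [h2, h3, Complex.sin, ← hb, neg_mul, Complex.exp_neg, ← hb]
  have hI : (Complex.I : ℂ) ^ 2 = -1 := Complex.I_sq
  field_simp
  ring_nf
  rw [Complex.I_sq]
  ring

lemma sin_pos {n m : ℕ} (h0 : 0 < m) (h1 : m < n) :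
    0 < Real.sin ((m : ℝ) * π / n) := by
  have hn0 : (0 : ℝ) < n := by exact_mod_cast (by omega : 0 < n)
  have hm : (0 : ℝ) < m := by exact_mod_cast h0
  apply Real.sin_pos_of_pos_of_lt_pi
  · exact div_pos (mul_pos hm Real.pi_pos) hn0
  · rw [div_lt_iff₀ hn0]
    have : (m : ℝ) < n := by exact_mod_cast h1
    nlinarith [Real.pi_pos]

lemma dterm {n m : ℕ} (h0 : 0 < m) (h1 : m < n) :
    ((1 / Real.sin ((m : ℝ) * π / n) ^ 2 : ℝ) : ℂ)
      = 4 * ((1 - zt n ^ m) * (1 - zt n ^ (n - m)))⁻¹ := by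
  have hs := sin_pos h0 h1
  rw [prod_eq h0 h1, ← Complex.ofReal_sin]
  have hsC : ((Real.sin ((m : ℝ) * π / n) : ℝ) : ℂ) ≠ 0 :=
    Complex.ofReal_ne_zero.mpr hs.ne'
  have h4 : Complex.sin ((m : ℂ) * (π : ℂ) / (n : ℂ)) ≠ 0 := by
    rw [Complex.ofReal_sin] at hsC
    push_cast at hsC
    exact hsC
  push_cast
  field_simp

lemma sumD (n : ℕ) (hn : 2 ≤ n) :
    ∑ m ∈ Ico 1 n, ((1 / Real.sin ((m : ℝ) * π / n) ^ 2 : ℝ) : ℂ)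
      = ((n : ℂ) ^ 2 - 1) / 3 := by
  have h : ∀ m ∈ Ico 1 n, ((1 / Real.sin ((m : ℝ) * π / n) ^ 2 : ℝ) : ℂ)
      = 4 * ((1 - zt n ^ m) * (1 - zt n ^ (n - m)))⁻¹ := by
    intro m hm
    rw [mem_Ico] at hm
    exact dterm (by omega) hm.2
  rw [Finset.sum_congr rfl h]
  have h2 : ∀ m ∈ Ico 1 n, (4 : ℂ) * ((1 - zt n ^ m) * (1 - zt n ^ (n - m)))⁻¹
      = 4 * ((1 - zt n ^ m)⁻¹ * (1 - zt n ^ (n - m))⁻¹) := by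
    intro m hm
    rw [mul_inv]
  rw [Finset.sum_congr rfl h2, ← Finset.mul_sum, sumT n hn]
  ring

lemma sin_sym {n m : ℕ} (h1 : m < n) :
    Real.sin (((n - m : ℕ) : ℝ) * π / n) = Real.sin ((m : ℝ) * π / n) := by
  have hn0 : (n : ℝ) ≠ 0 := by exact_mod_cast (by omega : n ≠ 0)
  have hx : ((n - m : ℕ) : ℝ) * π / n = π - (m : ℝ) * π / n := by
    rw [Nat.cast_sub h1.le]
    field_simp
  rw [hx, Real.sin_pi_sub]

lemma pair_term {n m : ℕ} (h0 : 0 < m) (h1 : m < n) :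
    ((1 / Real.sin ((m : ℝ) * π / n) ^ 2 : ℝ) : ℂ) * zt n ^ m
      + ((1 / Real.sin (((n - m : ℕ) : ℝ) * π / n) ^ 2 : ℝ) : ℂ) * zt n ^ (n - m)
      = 2 * ((1 / Real.sin ((m : ℝ) * π / n) ^ 2 : ℝ) : ℂ) - 4 := by
  rw [sin_sym h1]
  have hprod := prod_eq h0 h1
  rw [← Complex.ofReal_sin] at hprod
  have hmul1 : zt n ^ m * zt n ^ (n - m) = 1 := by
    rw [← pow_add, Nat.add_sub_cancel' h1.le, zt_pow_n n (by omega)]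
  have hs := sin_pos h0 h1
  have hsC : ((Real.sin ((m : ℝ) * π / n) : ℝ) : ℂ) ≠ 0 := Complex.ofReal_ne_zero.mpr hs.ne'
  have hζ : zt n ^ m + zt n ^ (n - m)
      = 2 - 4 * ((Real.sin ((m : ℝ) * π / n) : ℝ) : ℂ) ^ 2 := by
    linear_combination hmul1 - hprod
  have hds : ((1 / Real.sin ((m : ℝ) * π / n) ^ 2 : ℝ) : ℂ)
      * ((Real.sin ((m : ℝ) * π / n) : ℝ) : ℂ) ^ 2 = 1 := by
    have hsC' := hsC
    push_cast at hsC' ⊢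
    field_simp
  linear_combination ((1 / Real.sin ((m : ℝ) * π / n) ^ 2 : ℝ) : ℂ) * hζ - 4 * hds

lemma sumS (n : ℕ) (hn : 2 ≤ n) :
    ∑ m ∈ Ico 1 n, ((1 / Real.sin ((m : ℝ) * π / n) ^ 2 : ℝ) : ℂ) * zt n ^ m
      = ((n : ℂ) ^ 2 - 1) / 3 - 2 * ((n : ℂ) - 1) := by
  set f : ℕ → ℂ := fun m => ((1 / Real.sin ((m : ℝ) * π / n) ^ 2 : ℝ) : ℂ) * zt n ^ m with hf
  have hswap : ∑ m ∈ Ico 1 n, f m = ∑ m ∈ Ico 1 n, f (n - m) := by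
    apply Finset.sum_nbij' (fun m => n - m) (fun m => n - m)
    all_goals intro a ha
    all_goals simp only [mem_Ico] at *
    · omega
    · omega
    · omega
    · omega
    · congr 1
      omega
  have h2S : (∑ m ∈ Ico 1 n, f m) + (∑ m ∈ Ico 1 n, f m)
      = 2 * (((n : ℂ) ^ 2 - 1) / 3) - 4 * ((n : ℂ) - 1) := by
    nth_rewrite 2 [hswap]
    rw [← Finset.sum_add_distrib]
    have hterm : ∀ m ∈ Ico 1 n, f m + f (n - m)
        = 2 * ((1 / Real.sin ((m : ℝ) * π / n) ^ 2 : ℝ) : ℂ) - 4 := by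
      intro m hm
      rw [mem_Ico] at hm
      exact pair_term (by omega) hm.2
    rw [Finset.sum_congr rfl hterm, Finset.sum_sub_distrib, ← Finset.mul_sum, sumD n hn,
      Finset.sum_const, Nat.card_Ico]
    have : ((n - 1 : ℕ) : ℂ) = (n : ℂ) - 1 := by
      push_cast [Nat.cast_sub (by omega : 1 ≤ n)]
      ring
    rw [nsmul_eq_mul, this]
    ring
  linear_combination h2S / 2

lemma ee_eq (N j : ℕ) : ee (β N j) = zt (N + 1) ^ j := by
  rw [ee, β, zt, ← Complex.exp_nat_mul]
  congr 1
  push_cast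
  ring

lemma dd_eq (N m : ℕ) :
    ((dd N m : ℝ) : ℂ) = ((1 / Real.sin ((m : ℝ) * π / ((N + 1 : ℕ) : ℝ)) ^ 2 : ℝ) : ℂ) := by
  rw [dd]
  norm_cast

lemma dd_sym (N m : ℕ) (_h0 : 0 < m) (h1 : m < N + 1) :
    dd N ((N + 1) - m) = dd N m := by
  rw [dd, dd]
  have h := sin_sym (n := N + 1) (m := m) h1
  have hc : ((N : ℝ) + 1) = (((N + 1 : ℕ) : ℝ)) := by push_cast; ring
  rw [hc, h]

/-- Entry `l : Fin N` of the vector `(d_N, d_{N-1}, …, d_1)` is `d_{N - l}`. -/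
theorem eigen_identity (N : ℕ) (hN : 1 ≤ N) (l : Fin N) :
    -((dd N (N - (l : ℕ)) : ℂ))
      + ∑ j : Fin N, (matA N l j : ℂ) * ee (β N ((j : ℕ) + 1))
      = 2 * N * ee (β N ((l : ℕ) + 1)) := by

  set n : ℕ := N + 1 with hn
  have hn2 : 2 ≤ n := by omega
  have hl : (l : ℕ) < N := l.isLt
  set L : ℕ := (l : ℕ) + 1 with hL
  set D : ℂ := ((((N : ℝ) ^ 2 + 2 * N) / 3 : ℝ) : ℂ) with hD
  -- Step 1: rewrite the sum over Fin N into a sum over range N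
  have hsum1 : ∑ j : Fin N, (matA N l j : ℂ) * ee (β N ((j : ℕ) + 1))
      = ∑ j ∈ range N, (if (l : ℕ) = j then D
          else -((dd N (((l : ℕ) : ℤ) - (j : ℤ)).natAbs : ℝ) : ℂ)) * zt n ^ (j + 1) := by
    rw [← Fin.sum_univ_eq_sum_range (fun j => (if (l : ℕ) = j then D
          else -((dd N (((l : ℕ) : ℤ) - (j : ℤ)).natAbs : ℝ) : ℂ)) * zt n ^ (j + 1)) N]
    refine Finset.sum_congr rfl fun j _ => ?_
    rw [ee_eq]
    congr 1
    rw [matA]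
    simp only [Fin.ext_iff]
    split
    · rw [hD]
    · push_cast
      ring
  -- Step 2: split off diagonal
  have hsum2 : ∑ j ∈ range N, (if (l : ℕ) = j then D
          else -((dd N (((l : ℕ) : ℤ) - (j : ℤ)).natAbs : ℝ) : ℂ)) * zt n ^ (j + 1)
      = D * zt n ^ L - ∑ j ∈ range N, (if (l : ℕ) = j then 0
          else ((dd N (((l : ℕ) : ℤ) - (j : ℤ)).natAbs : ℝ) : ℂ)) * zt n ^ (j + 1) := by
    rw [eq_sub_iff_add_eq, ← Finset.sum_add_distrib]
    have : ∀ j ∈ range N, ((if (l : ℕ) = j then D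
          else -((dd N (((l : ℕ) : ℤ) - (j : ℤ)).natAbs : ℝ) : ℂ)) * zt n ^ (j + 1)
          + (if (l : ℕ) = j then 0
          else ((dd N (((l : ℕ) : ℤ) - (j : ℤ)).natAbs : ℝ) : ℂ)) * zt n ^ (j + 1))
        = (if (l : ℕ) = j then D * zt n ^ (j + 1) else 0) := by
      intro j _
      split
      · ring
      · ring
    rw [Finset.sum_congr rfl this, Finset.sum_ite_eq (range N) (l : ℕ)
      (fun j => D * zt n ^ (j + 1)), if_pos (mem_range.mpr hl)]
  -- value of the S sum
  have hS : ∑ m ∈ Ico 1 n, ((dd N m : ℝ) : ℂ) * zt n ^ m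
      = ((n : ℂ) ^ 2 - 1) / 3 - 2 * ((n : ℂ) - 1) := by
    rw [Finset.sum_congr rfl (fun m _ => by rw [dd_eq])]
    exact sumS n hn2
  -- the row identity
  have hrow : ((dd N (N - (l : ℕ)) : ℝ) : ℂ)
      + ∑ j ∈ range N, (if (l : ℕ) = j then 0
          else ((dd N (((l : ℕ) : ℤ) - (j : ℤ)).natAbs : ℝ) : ℂ)) * zt n ^ (j + 1)
      = (∑ m ∈ Ico 1 n, ((dd N m : ℝ) : ℂ) * zt n ^ m) * zt n ^ L := by
    rw [Finset.sum_mul]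
    have hR : ∀ m ∈ Ico 1 n, ((dd N m : ℝ) : ℂ) * zt n ^ m * zt n ^ L
        = ((dd N m : ℝ) : ℂ) * zt n ^ (m + L) := fun m _ => by rw [mul_assoc, ← pow_add]
    rw [Finset.sum_congr rfl hR]
    have hK1 : 1 ≤ N - (l : ℕ) := by omega
    have hKn : N - (l : ℕ) < n := by omega
    rw [← Finset.sum_Ico_consecutive (fun m => ((dd N m : ℝ) : ℂ) * zt n ^ (m + L))
      hK1 (le_of_lt hKn), Finset.sum_eq_sum_Ico_succ_bot hKn]
    rw [Finset.range_eq_Ico,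
      ← Finset.sum_Ico_consecutive (fun j => (if (l : ℕ) = j then 0
          else ((dd N (((l : ℕ) : ℤ) - (j : ℤ)).natAbs : ℝ) : ℂ)) * zt n ^ (j + 1))
      (Nat.zero_le (l : ℕ)) (le_of_lt hl),
      Finset.sum_eq_sum_Ico_succ_bot hl]
    have hdiag : (if (l : ℕ) = (l : ℕ) then (0 : ℂ)
        else ((dd N (((l : ℕ) : ℤ) - ((l : ℕ) : ℤ)).natAbs : ℝ) : ℂ)) * zt n ^ ((l : ℕ) + 1)
        = 0 := by rw [if_pos rfl, zero_mul]
    rw [hdiag, zero_add]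
    -- middle term
    have hB : ((dd N (N - (l : ℕ)) : ℝ) : ℂ) * zt n ^ ((N - (l : ℕ)) + L)
        = ((dd N (N - (l : ℕ)) : ℝ) : ℂ) := by
      rw [show (N - (l : ℕ)) + L = n by omega, zt_pow_n n (by omega), mul_one]
    -- part A : j ∈ Ico (l+1) N  ↔  m ∈ Ico 1 (N - l)
    have hA : ∑ j ∈ Ico ((l : ℕ) + 1) N, (if (l : ℕ) = j then 0
          else ((dd N (((l : ℕ) : ℤ) - (j : ℤ)).natAbs : ℝ) : ℂ)) * zt n ^ (j + 1)
        = ∑ m ∈ Ico 1 (N - (l : ℕ)), ((dd N m : ℝ) : ℂ) * zt n ^ (m + L) := by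
      rw [Finset.sum_Ico_eq_sum_range, Finset.sum_Ico_eq_sum_range,
        show N - ((l : ℕ) + 1) = (N - (l : ℕ)) - 1 from by omega]
      refine Finset.sum_congr rfl fun i hi => ?_
      rw [mem_range] at hi
      rw [if_neg (by omega)]
      rw [show ((((l : ℕ) : ℤ)) - (((l : ℕ) + 1 + i : ℕ) : ℤ)).natAbs = 1 + i from by omega]
      rw [show (l : ℕ) + 1 + i + 1 = (1 + i) + L from by omega]
    -- part C : j ∈ Ico 0 l  ↔  m ∈ Ico (N - l + 1) n
    have hC : ∑ j ∈ Ico 0 (l : ℕ), (if (l : ℕ) = j then 0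
          else ((dd N (((l : ℕ) : ℤ) - (j : ℤ)).natAbs : ℝ) : ℂ)) * zt n ^ (j + 1)
        = ∑ m ∈ Ico ((N - (l : ℕ)) + 1) n, ((dd N m : ℝ) : ℂ) * zt n ^ (m + L) := by
      rw [Finset.sum_Ico_eq_sum_range, Finset.sum_Ico_eq_sum_range,
        show n - ((N - (l : ℕ)) + 1) = (l : ℕ) - 0 from by omega]
      refine Finset.sum_congr rfl fun i hi => ?_
      rw [mem_range] at hi
      rw [if_neg (by omega)]
      rw [show ((((l : ℕ) : ℤ)) - ((0 + i : ℕ) : ℤ)).natAbs = (l : ℕ) - i from by omega]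
      rw [show (N - (l : ℕ)) + 1 + i = (N + 1) - ((l : ℕ) - i) from by omega,
        dd_sym N ((l : ℕ) - i) (by omega) (by omega)]
      have hz : zt n ^ ((N + 1) - ((l : ℕ) - i) + L) = zt n ^ ((0 + i) + 1) := by
        rw [show (N + 1) - ((l : ℕ) - i) + L = n + ((0 + i) + 1) from by omega]
        rw [pow_add, zt_pow_n n (by omega), one_mul]
      rw [hz]
    rw [hA, hB, hC]
    ring
  have hval : D = ((n : ℂ) ^ 2 - 1) / 3 := by
    rw [hD, hn]
    push_cast
    ring
  have hNn : 2 * (N : ℂ) = 2 * ((n : ℂ) - 1) := by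
    rw [hn]
    push_cast
    ring
  rw [hsum1, hsum2, ee_eq, ← hn, hval]
  rw [mul_comm (2 : ℂ) (N : ℂ), show ((N : ℂ)) * 2 = 2 * (N : ℂ) from by ring, hNn]
  linear_combination -hrow - zt n ^ L * hS
end

section
/- For any integer N ≥ 1, ∑_{l=1}^{N} d_l e^{4πil/(N+1)} = D - 4(N-1), where d_l = 1/sin²(lπ/(N+1)) and D = ∑_{l=1}^{N} d_l = (N²+2N)/3. -/
open Real Complex Finset

lemma sumI (n : ℕ) : ∑ k ∈ range n, (k:ℂ) = n*(n-1)/2 := by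
  induction n with
  | zero => simp
  | succ m ih => rw [Finset.sum_range_succ, ih]; push_cast; ring

lemma sumI2 (n : ℕ) : ∑ k ∈ range n, (k:ℂ)^2 = n*(n-1)*(2*n-1)/6 := by
  induction n with
  | zero => simp
  | succ m ih => rw [Finset.sum_range_succ, ih]; push_cast; ring

lemma I1 (n : ℕ) (x : ℂ) :
    (∑ k ∈ range n, (k:ℂ) * x^k) * (x-1)
      = ((n:ℂ)-1)*x^n + 1 - ∑ k ∈ range n, x^k := by
  induction n with
  | zero => simp
  | succ m ih =>
    rw [Finset.sum_range_succ, Finset.sum_range_succ (f := fun k => x^k), add_mul, ih]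
    push_cast; ring

lemma I2 (n : ℕ) (x : ℂ) :
    (∑ k ∈ range n, (k:ℂ)^2 * x^k) * (x-1)
      = ((n:ℂ)-1)^2*x^n - 2*(∑ k ∈ range n, (k:ℂ)*x^k) + (∑ k ∈ range n, x^k) - 1 := by
  induction n with
  | zero => simp
  | succ m ih =>
    rw [Finset.sum_range_succ, Finset.sum_range_succ (f := fun k => x^k),
      Finset.sum_range_succ (f := fun k => (k:ℂ)*x^k), add_mul, ih]
    push_cast; ring

lemma per_root (n : ℕ) (z : ℂ) (hz : z^n = 1) (h1 : z ≠ 1) :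
    (∑ k ∈ range n, (k:ℂ)*((n:ℂ)-k) * z^k) * (z-1)^2 = 2*n*z := by
  have hz1 : z - 1 ≠ 0 := sub_ne_zero.mpr h1
  have hG : (∑ k ∈ range n, z^k) = 0 := by
    have := geom_sum_mul z n
    rw [hz, sub_self] at this
    exact (mul_eq_zero.mp this).resolve_right hz1
  have hE1 := I1 n z
  have hE2 := I2 n z
  rw [hz, hG] at hE1 hE2
  have hQ : (∑ k ∈ range n, (k:ℂ)*((n:ℂ)-k) * z^k)
      = (n:ℂ) * (∑ k ∈ range n, (k:ℂ)*z^k) - ∑ k ∈ range n, (k:ℂ)^2*z^k := by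
    rw [Finset.mul_sum, ← Finset.sum_sub_distrib]
    exact Finset.sum_congr rfl fun k _ => by ring
  rw [hQ]
  linear_combination ((n:ℂ)*(z-1)) * hE1 - (z-1) * hE2 + 2 * hE1


lemma zeta_pow_dvd (n m : ℕ) (hn : 0 < n) (h : n ∣ m) :
    (Complex.exp (2*(π:ℂ)*I/(n:ℂ)))^m = 1 := by
  obtain ⟨t, rfl⟩ := h
  rw [← Complex.exp_nat_mul]
  have hn0 : (n:ℂ) ≠ 0 := Nat.cast_ne_zero.mpr hn.ne'
  have : ((n*t : ℕ):ℂ) * (2*(π:ℂ)*I/(n:ℂ)) = (t:ℕ) * (2*π*I) := by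
    push_cast; field_simp
  rw [this, Complex.exp_nat_mul_two_pi_mul_I]

lemma zeta_pow_eq_one_iff (n m : ℕ) (hn : 0 < n) :
    (Complex.exp (2*(π:ℂ)*I/(n:ℂ)))^m = 1 ↔ n ∣ m := by
  constructor
  · intro h
    rw [← Complex.exp_nat_mul, Complex.exp_eq_one_iff] at h
    obtain ⟨j, hj⟩ := h
    have hn0 : (n:ℂ) ≠ 0 := Nat.cast_ne_zero.mpr hn.ne'
    have hπ : (π:ℂ) ≠ 0 := Complex.ofReal_ne_zero.mpr Real.pi_ne_zero
    have h2 : (m:ℂ) = (j:ℂ) * (n:ℂ) := by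
      field_simp at hj
      apply mul_right_cancel₀ (b := 2*(π:ℂ)*I) (by simp [hπ, Complex.I_ne_zero])
      linear_combination (2*(π:ℂ)*I) * hj
    have h3 : (m:ℤ) = j * n := by exact_mod_cast h2
    have : (n:ℤ) ∣ (m:ℤ) := ⟨j, by linarith [h3]⟩
    exact_mod_cast this
  · exact zeta_pow_dvd n m hn


lemma term_eq' (n l : ℕ) (hn : 2 ≤ n) (h1 : 1 ≤ l) (h2 : l < n) :
    ((1 / (Real.sin (l * π / n))^2 : ℝ) : ℂ) * Complex.exp (((4 * π * l / n : ℝ) : ℂ) * I)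
      = -(2/(n:ℂ)) * ∑ k ∈ range n, (k:ℂ)*((n:ℂ)-k) *
          (Complex.exp (2*(π:ℂ)*I/(n:ℂ)))^(l*(k+2)) := by
  have hnR : (0:ℝ) < n := by exact_mod_cast Nat.lt_of_lt_of_le Nat.zero_lt_two hn
  have hn0 : (n:ℂ) ≠ 0 := Nat.cast_ne_zero.mpr (by omega)
  set ζ := Complex.exp (2*(π:ℂ)*I/(n:ℂ)) with hζ
  set w := Complex.exp (((l * π / n : ℝ) : ℂ) * I) with hw
  have hw0 : w ≠ 0 := Complex.exp_ne_zero _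
  set z := ζ^l with hzdef
  have hzw : z = w^2 := by
    rw [hzdef, hζ, hw, ← Complex.exp_nat_mul, ← Complex.exp_nat_mul]
    congr 1
    push_cast
    field_simp
  have hz0 : z ≠ 0 := by rw [hzw]; exact pow_ne_zero _ hw0
  have hzn : z^n = 1 := by
    rw [hzdef, ← pow_mul]
    exact zeta_pow_dvd n (l*n) (by omega) ⟨l, mul_comm l n⟩
  have hz1 : z ≠ 1 := by
    rw [hzdef]
    intro h
    obtain ⟨t, ht⟩ := (zeta_pow_eq_one_iff n l (by omega)).mp h
    rcases Nat.eq_zero_or_pos t with rfl | hpos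
    · omega
    · have : n ≤ n * t := Nat.le_mul_of_pos_right n hpos
      omega
  set s := Real.sin (l * π / n) with hsdef
  have hs : s ≠ 0 := by
    rw [hsdef]
    apply ne_of_gt
    apply Real.sin_pos_of_pos_of_lt_pi
    · positivity
    · rw [div_lt_iff₀ hnR]
      have : (l:ℝ) < n := by exact_mod_cast h2
      nlinarith [Real.pi_pos]
  have hsC : ((s:ℝ):ℂ) ≠ 0 := Complex.ofReal_ne_zero.mpr hs
  have hsz : ((s:ℝ):ℂ)^2 * (4*z) = -(z-1)^2 := by
    rw [hzw, hsdef, Complex.ofReal_sin]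
    simp only [Complex.sin]
    rw [show -((l * π / n : ℝ):ℂ)*I = -(((l * π / n : ℝ):ℂ)*I) by ring, Complex.exp_neg, ← hw]
    rw [div_pow, mul_pow, Complex.I_sq]
    field_simp
    ring
  have hQ := per_root n z hzn hz1
  have hz1' : z - 1 ≠ 0 := sub_ne_zero.mpr hz1
  have hsum : ∑ k ∈ range n, (k:ℂ)*((n:ℂ)-k) * ζ^(l*(k+2))
      = (∑ k ∈ range n, (k:ℂ)*((n:ℂ)-k) * z^k) * z^2 := by
    rw [Finset.sum_mul]
    refine Finset.sum_congr rfl fun k _ => ?_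
    rw [pow_mul, ← hzdef, pow_add]
    ring
  rw [hsum]
  have hee : Complex.exp (((4 * π * l / n : ℝ):ℂ) * I) = z^2 := by
    rw [hzw, ← pow_mul, hw, ← Complex.exp_nat_mul]
    congr 1
    push_cast
    field_simp
  rw [hee]
  set Q := ∑ k ∈ range n, (k:ℂ)*((n:ℂ)-k) * z^k with hQdef
  have e1 : ((s:ℝ):ℂ)^2 = -(z-1)^2/(4*z) := by
    rw [eq_div_iff (by simp [hz0] : (4:ℂ)*z ≠ 0)]
    linear_combination hsz
  have e2 : Q = 2*n*z/(z-1)^2 := by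
    rw [eq_div_iff (pow_ne_zero 2 hz1')]
    exact hQ
  push_cast
  rw [e1, e2]
  field_simp
  ring



lemma cast_succ (N : ℕ) : ((N+1:ℕ):ℂ) = (N:ℂ)+1 := by push_cast; ring

lemma my_inner_sum (N k : ℕ) (hN : 1 ≤ N) (hk : k < N+1) :
    ∑ l ∈ Icc 1 N, (Complex.exp (2*(π:ℂ)*I/((N:ℂ)+1)))^(l*(k+2))
      = if k + 2 = N + 1 then (N:ℂ) else -1 := by
  have hcast : ((N+1:ℕ):ℂ) = (N:ℂ)+1 := cast_succ N
  set ζ := Complex.exp (2*(π:ℂ)*I/((N:ℂ)+1)) with hζ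
  have hζ' : ζ = Complex.exp (2*(π:ℂ)*I/((N+1:ℕ):ℂ)) := by rw [hζ, hcast]
  set w := ζ^(k+2) with hwdef
  have hrw : ∀ l ∈ Icc 1 N, ζ^(l*(k+2)) = w^l := fun l _ => by
    rw [hwdef, mul_comm, pow_mul]
  rw [Finset.sum_congr rfl hrw]
  have hset : Icc 1 N = (range (N+1)).erase 0 := by
    ext a; simp only [Finset.mem_Icc, Finset.mem_erase, Finset.mem_range]; omega
  rw [hset, Finset.sum_erase_eq_sub (by simp)]
  rw [pow_zero]
  split_ifs with h
  · have hw1 : w = 1 := by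
      rw [hwdef, hζ', h]
      exact zeta_pow_dvd (N+1) (N+1) (by omega) dvd_rfl
    simp only [hw1, one_pow, Finset.sum_const, Finset.card_range, nsmul_eq_mul, mul_one]
    push_cast; ring
  · have hw1 : w ≠ 1 := by
      rw [hwdef, hζ']
      intro hcon
      obtain ⟨t, ht⟩ := (zeta_pow_eq_one_iff (N+1) (k+2) (by omega)).mp hcon
      rcases t with _ | t
      · omega
      · rcases t with _ | t
        · omega
        · have : (N+1)*2 ≤ (N+1)*(t+1+1) := Nat.mul_le_mul_left (N+1) (by omega)
          omega
    have hwn : w^(N+1) = 1 := by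
      rw [hwdef, hζ', ← pow_mul]
      exact zeta_pow_dvd (N+1) ((k+2)*(N+1)) (by omega) ⟨k+2, mul_comm (k+2) (N+1)⟩
    have hGw := geom_sum_mul w (N+1)
    rw [hwn, sub_self] at hGw
    have hG : ∑ l ∈ range (N+1), w^l = 0 :=
      (mul_eq_zero.mp hGw).resolve_right (sub_ne_zero.mpr hw1)
    rw [hG]; ring

lemma term_eq_s14 (N l : ℕ) (hN : 1 ≤ N) (h1 : 1 ≤ l) (h2 : l ≤ N) :
    (dd N l : ℂ) * ee (4 * π * l / (N + 1))
      = -(2/((N:ℂ)+1)) * ∑ k ∈ range (N+1), (k:ℂ)*(((N:ℂ)+1)-k) *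
          (Complex.exp (2*(π:ℂ)*I/((N:ℂ)+1)))^(l*(k+2)) := by
  have := term_eq' (N+1) l (by omega) h1 (by omega)
  rw [dd, ee]
  push_cast at this ⊢
  convert this using 3

theorem sum_d_exp_double (N : ℕ) (hN : 1 ≤ N) :
    ∑ l ∈ Finset.Icc 1 N, (dd N l : ℂ) * ee (4 * π * l / (N + 1))
      = (((N : ℝ)^2 + 2 * N) / 3 : ℝ) - 4 * ((N : ℂ) - 1) := by
  have hn0 : (N:ℂ)+1 ≠ 0 := by
    have : ((N+1:ℕ):ℂ) ≠ 0 := Nat.cast_ne_zero.mpr (by omega)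
    rwa [cast_succ] at this
  rw [Finset.sum_congr rfl (fun l hl => term_eq_s14 N l hN (Finset.mem_Icc.mp hl).1 (Finset.mem_Icc.mp hl).2),
    ← Finset.mul_sum, Finset.sum_comm]
  have step2 : ∀ k ∈ range (N+1),
      ∑ l ∈ Icc 1 N, (k:ℂ)*(((N:ℂ)+1)-k) * (Complex.exp (2*(π:ℂ)*I/((N:ℂ)+1)))^(l*(k+2))
        = (k:ℂ)*(((N:ℂ)+1)-k) * (if k + 2 = N + 1 then (N:ℂ) else -1) := by
    intro k hk
    rw [← Finset.mul_sum, my_inner_sum N k hN (Finset.mem_range.mp hk)]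
  rw [Finset.sum_congr rfl step2]
  have split : ∑ k ∈ range (N+1), (k:ℂ)*(((N:ℂ)+1)-k) * (if k + 2 = N + 1 then (N:ℂ) else -1)
      = ∑ k ∈ range (N+1), (-((k:ℂ)*(((N:ℂ)+1)-k))
          + (if k = N-1 then (k:ℂ)*(((N:ℂ)+1)-k)*((N:ℂ)+1) else 0)) := by
    refine Finset.sum_congr rfl fun k hk => ?_
    by_cases h : k + 2 = N + 1
    · rw [if_pos h, if_pos (by omega)]; ring
    · rw [if_neg h, if_neg (by omega)]; ring
  rw [split, Finset.sum_add_distrib, Finset.sum_ite_eq' (range (N+1)) (N-1)]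
  have hmem : N - 1 ∈ range (N+1) := Finset.mem_range.mpr (by omega)
  rw [if_pos hmem]
  have hneg : ∑ k ∈ range (N+1), (-((k:ℂ)*(((N:ℂ)+1)-k)))
      = -(((N:ℂ)+1)*(∑ k ∈ range (N+1), (k:ℂ)) - ∑ k ∈ range (N+1), (k:ℂ)^2) := by
    rw [Finset.mul_sum, ← Finset.sum_sub_distrib, ← Finset.sum_neg_distrib]
    exact Finset.sum_congr rfl fun k _ => by ring
  rw [hneg, sumI, sumI2, cast_succ]
  have hc : ((N-1:ℕ):ℂ) = (N:ℂ) - 1 := by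
    rw [Nat.cast_sub hN]; simp
  rw [hc]
  push_cast
  field_simp
  ring
end
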